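/- arXiv:1406.6588 — 11 statements merged into one kernel-verified Lean document; each statement's English description precedes it below -/
import Mathlib

section
/- Let 0 < |n| < 1 and let (α,p) be in the interior of K_{|n|}. For every η > 0 there exists ν = ν(n,α,p,η) > 0 such that for all v > u > 0 with 1 + η ≤ v/u < 1 + η^{-1}, the matrix inequality Q_{α,p}(v,u) ≥ v^γ ν I₂ holds, where I₂ is the 2×2 identity matrix. -/
open MeasureTheory Set Filter Topology

noncomputable section

/-- The critical exponent `P₋(α) = 1 + (2/n²)(1-α)(α - √(α²-n²))`. -/
def Pminus (n a : ℝ) : ℝ := 1 + (2 / n ^ 2) * (1 - a) * (a - Real.sqrt (a ^ 2 - n ^ 2))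

/-- The critical exponent `P₊(α) = 1 + (2/n²)(1-α)(α + √(α²-n²))`. -/
def Pplus (n a : ℝ) : ℝ := 1 + (2 / n ^ 2) * (1 - a) * (a + Real.sqrt (a ^ 2 - n ^ 2))

/-- The admissible set `K_{|n|}` of pairs `(α,p)`. -/
def Kset (n : ℝ) : Set (ℝ × ℝ) :=
  if n = 0 then {q | 0 < q.1 ∧ q.1 ≤ 1 ∧ 1 ≤ q.1 * q.2}
  else {q | |n| ≤ q.1 ∧ q.1 ≤ 1 ∧ Pminus n q.1 ≤ q.2 ∧ q.2 ≤ Pplus n q.1}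

/-- The symmetric matrix `Q_{α,p}(v,u)`, with `γ = n/α`, `Γ = (1-α)/(α(p-1))`,
and the convention `Q_{1,1} = 0`. -/
def Qmat (n a p v u : ℝ) : Matrix (Fin 2) (Fin 2) ℝ :=
  if a = 1 ∧ p = 1 then 0 else
  (p - 1) • !![v ^ (n / a) * (1 + ((1 - a) / (a * (p - 1))) * (u / v - 1)),
      -(v ^ (n / a) + u ^ (n / a)) / 2;
      -(v ^ (n / a) + u ^ (n / a)) / 2,
      u ^ (n / a) * (1 + ((1 - a) / (a * (p - 1))) * (v / u - 1))]

/-- The symmetric matrix `M_{α,p}`, with `γ = n/α`, `Γ = (1-α)/(α(p-1))`,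
and the convention `M_{1,1} = 0`. -/
def Mmat (n a p : ℝ) : Matrix (Fin 2) (Fin 2) ℝ :=
  if a = 1 ∧ p = 1 then 0 else
  (p - 1) • !![(1 : ℝ), -((1 - a) / (a * (p - 1))) + (n / a) / 2;
      -((1 - a) / (a * (p - 1))) + (n / a) / 2,
      ((1 - a) / (a * (p - 1))) * (1 - n / a)]

/-!
`Q_{α,p}` is homogeneous: `Q(v,u) = (p-1) v^γ N(u/v)` with `N(s) = Q(1,s)/(p-1)`. One computes
`det N(s) = Γ(1-Γ)(1-s)² s^{γ-1} - (1-s^γ)²/4`, and convexity of `sinh` on `[0,∞)` gives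
`(1-s^γ)² ≤ γ²(1-s)² s^{γ-1}` for `|γ| ≤ 1`, so `det N(s) ≥ (Γ(1-Γ) - γ²/4)(1-s)² s^{γ-1}`.
The interior of `K_{|n|}` is where `n²(p-1)² + 4(1-α)² < 4α(1-α)(p-1)`, i.e. `γ² < 4Γ(1-Γ)`.
Since `tr N(s) ≤ 2 s^{γ-1}`, the smallest eigenvalue of `N(s)` is at least
`det N / tr N ≥ (Γ(1-Γ) - γ²/4)(1-s)²/2`, which is bounded below on `s ≤ 1/(1+η)`.
-/

lemma convexOn_sinh_Ici : ConvexOn ℝ (Ici 0) Real.sinh := by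
  refine MonotoneOn.convexOn_of_deriv (convex_Ici 0) Real.continuous_sinh.continuousOn
    Real.differentiable_sinh.differentiableOn ?_
  rw [Real.deriv_sinh, interior_Ici]
  intro x hx y hy hxy
  rw [Real.cosh_le_cosh, abs_of_pos hx, abs_of_pos hy]
  exact hxy

lemma sinh_mul_le_mul_sinh {c t : ℝ} (hc0 : 0 ≤ c) (hc1 : c ≤ 1) (ht : 0 ≤ t) :
    Real.sinh (c * t) ≤ c * Real.sinh t := by
  simpa using convexOn_sinh_Ici.2 (mem_Ici.2 ht) (mem_Ici.2 le_rfl) hc0 (sub_nonneg.2 hc1)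
    (add_sub_cancel c 1)

lemma sq_sinh_mul_le {c : ℝ} (hc : |c| ≤ 1) (t : ℝ) :
    Real.sinh (c * t) ^ 2 ≤ c ^ 2 * Real.sinh t ^ 2 := by
  have h := sinh_mul_le_mul_sinh (abs_nonneg c) hc (abs_nonneg t)
  have h0 : 0 ≤ Real.sinh (|c| * |t|) := Real.sinh_nonneg_iff.2 (by positivity)
  rw [← sq_abs, Real.abs_sinh, abs_mul, ← sq_abs c, ← sq_abs (Real.sinh t), Real.abs_sinh,
    ← mul_pow]
  exact pow_le_pow_left₀ h0 h 2

lemma sq_one_sub_exp_two_mul (a : ℝ) :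
    (1 - Real.exp (2 * a)) ^ 2 = 4 * Real.exp (2 * a) * Real.sinh a ^ 2 := by
  rw [Real.sinh_eq, Real.exp_neg, show 2 * a = a + a by ring, Real.exp_add]
  field_simp
  ring

lemma sq_one_sub_rpow_le {γ s : ℝ} (hγ : |γ| ≤ 1) (hs : 0 < s) :
    (1 - s ^ γ) ^ 2 ≤ γ ^ 2 * (1 - s) ^ 2 * (s ^ γ / s) := by
  obtain ⟨t, rfl⟩ : ∃ t, s = Real.exp (2 * t) :=
    ⟨Real.log s / 2, by rw [mul_div_cancel₀ _ two_ne_zero, Real.exp_log hs]⟩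
  rw [← Real.exp_mul, show 2 * t * γ = 2 * (γ * t) by ring, sq_one_sub_exp_two_mul,
    sq_one_sub_exp_two_mul]
  have := sq_sinh_mul_le hγ t
  have hpos := Real.exp_pos (2 * (γ * t))
  calc 4 * Real.exp (2 * (γ * t)) * Real.sinh (γ * t) ^ 2
      ≤ 4 * Real.exp (2 * (γ * t)) * (γ ^ 2 * Real.sinh t ^ 2) := by gcongr
    _ = _ := by field_simp

lemma posSemidef_fin_two_of {a b d : ℝ} (ha : 0 < a) (hdet : b ^ 2 ≤ a * d) :
    (!![a, b; b, d]).PosSemidef := by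
  rw [Matrix.posSemidef_iff_dotProduct_mulVec]
  refine ⟨by ext i j; fin_cases i <;> fin_cases j <;> rfl, fun z => ?_⟩
  simp only [dotProduct, Pi.star_apply, star_trivial, Matrix.mulVec, Matrix.of_apply,
    Matrix.cons_val', Matrix.cons_val_fin_one, Fin.sum_univ_two, Matrix.cons_val_zero,
    Matrix.cons_val_one]
  have hsos : a * (z 0 * (a * z 0 + b * z 1) + z 1 * (b * z 0 + d * z 1)) =
      (a * z 0 + b * z 1) ^ 2 + (a * d - b ^ 2) * z 1 ^ 2 := by ring
  refine nonneg_of_mul_nonneg_right ?_ ha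
  rw [hsos]
  have := sub_nonneg.2 hdet
  positivity

lemma posSemidef_sub_smul_one_fin_two {a b d μ : ℝ} (ha : μ < a)
    (hdet : μ * (a + d) ≤ a * d - b ^ 2) :
    (!![a, b; b, d] - μ • (1 : Matrix (Fin 2) (Fin 2) ℝ)).PosSemidef := by
  have hshift : !![a, b; b, d] - μ • (1 : Matrix (Fin 2) (Fin 2) ℝ) = !![a - μ, b; b, d - μ] := by
    ext i j; fin_cases i <;> fin_cases j <;> simp
  rw [hshift]
  exact posSemidef_fin_two_of (sub_pos.2 ha) (by nlinarith [sq_nonneg μ])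

/-- `N(s) = Q_{α,p}(1, s) / (p - 1)`, written with `γ = n/α` and `Γ = (1-α)/(α(p-1))`. -/
def normalizedQmat (γ Γ s : ℝ) : Matrix (Fin 2) (Fin 2) ℝ :=
  !![1 + Γ * (s - 1), -(1 + s ^ γ) / 2; -(1 + s ^ γ) / 2, s ^ γ * (1 + Γ * (s⁻¹ - 1))]

lemma Qmat_eq_smul_normalizedQmat {n α p v u : ℝ} (hα : α ≠ 1) (hv : 0 < v) (hu : 0 ≤ u) :
    Qmat n α p v u =
      ((p - 1) * v ^ (n / α)) • normalizedQmat (n / α) ((1 - α) / (α * (p - 1))) (u / v) := by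
  have hu' : u ^ (n / α) = v ^ (n / α) * (u / v) ^ (n / α) := by
    rw [← Real.mul_rpow hv.le (div_nonneg hu hv.le), mul_div_cancel₀ _ hv.ne']
  rw [Qmat, if_neg (fun h => hα h.1), normalizedQmat, Matrix.smul_of, Matrix.smul_of]
  congr 1
  ext i j
  fin_cases i <;> fin_cases j <;> simp [hu', inv_div, -mul_eq_mul_left_iff] <;> ring

lemma le_det_normalizedQmat {γ Γ s : ℝ} (hγ : |γ| ≤ 1) (hs : 0 < s) :
    (Γ * (1 - Γ) - γ ^ 2 / 4) * (1 - s) ^ 2 * (s ^ γ / s) ≤ (normalizedQmat γ Γ s).det := by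
  have hdet : (normalizedQmat γ Γ s).det =
      Γ * (1 - Γ) * (1 - s) ^ 2 * (s ^ γ / s) - (1 - s ^ γ) ^ 2 / 4 := by
    rw [normalizedQmat, Matrix.det_fin_two_of]
    field_simp
    ring
  rw [hdet]
  linarith [sq_one_sub_rpow_le hγ hs]

lemma exists_pos_normalizedQmat_sub_smul_one_posSemidef {γ Γ b : ℝ} (hγ : |γ| ≤ 1)
    (hΓ : 0 < Γ) (hdisc : γ ^ 2 < 4 * Γ * (1 - Γ)) (hb : b < 1) :
    ∃ μ : ℝ, 0 < μ ∧ ∀ s, 0 < s → s ≤ b →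
      (normalizedQmat γ Γ s - μ • (1 : Matrix (Fin 2) (Fin 2) ℝ)).PosSemidef := by
  have hΓ1 : Γ < 1 := by nlinarith [sq_nonneg γ]
  set κ := Γ * (1 - Γ) - γ ^ 2 / 4 with hκ_def
  have hκ : 0 < κ := by linarith
  obtain ⟨μ, hμ, hμΓ, hμκ⟩ : ∃ μ : ℝ, 0 < μ ∧ μ < 1 - Γ ∧ 2 * μ ≤ κ * (1 - b) ^ 2 :=
    ⟨min (1 - Γ) (κ * (1 - b) ^ 2) / 2, by positivity,
      by linarith [min_le_left (1 - Γ) (κ * (1 - b) ^ 2)],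
      by linarith [min_le_right (1 - Γ) (κ * (1 - b) ^ 2)]⟩
  refine ⟨μ, hμ, fun s hs0 hsb => ?_⟩
  have hs1 : s < 1 := hsb.trans_lt hb
  set x := s ^ γ
  have hx0 : 0 < x := Real.rpow_pos_of_pos hs0 γ
  have hsx : s ≤ x := by
    simpa using Real.rpow_le_rpow_of_exponent_ge hs0 hs1.le (abs_le.1 hγ).2
  have hxs : 1 ≤ x / s := (one_le_div hs0).2 hsx
  have hs_inv : 1 ≤ s⁻¹ := (one_le_inv₀ hs0).2 hs1.le
  have ha : 1 - Γ ≤ 1 + Γ * (s - 1) := by nlinarith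
  have ha' : 1 + Γ * (s - 1) ≤ 1 := by nlinarith
  have hd' : x * (1 + Γ * (s⁻¹ - 1)) ≤ x / s := by
    rw [div_eq_mul_inv]; gcongr; nlinarith
  apply posSemidef_sub_smul_one_fin_two (by linarith)
  calc μ * (1 + Γ * (s - 1) + x * (1 + Γ * (s⁻¹ - 1)))
      ≤ μ * (2 * (x / s)) := by gcongr; linarith
    _ ≤ κ * (1 - b) ^ 2 * (x / s) := by nlinarith
    _ ≤ κ * (1 - s) ^ 2 * (x / s) := by gcongr
    _ ≤ (normalizedQmat γ Γ s).det := le_det_normalizedQmat hγ hs0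
    _ = _ := by rw [normalizedQmat, Matrix.det_fin_two_of]; ring

lemma exists_shifts_mem_of_mem_interior {S : Set (ℝ × ℝ)} {a b : ℝ} (h : (a, b) ∈ interior S) :
    ∃ ε > 0, (a + ε, b) ∈ S ∧ (a - ε, b) ∈ S ∧ (a, b + ε) ∈ S ∧ (a, b - ε) ∈ S := by
  obtain ⟨ε, hε, hball⟩ := Metric.mem_nhds_iff.1 (mem_interior_iff_mem_nhds.1 h)
  refine ⟨ε / 2, half_pos hε, ?_, ?_, ?_, ?_⟩ <;> apply hball <;>
    simp [Prod.dist_eq, abs_of_pos hε, hε]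

lemma quadratic_lt_of_Pminus_lt_of_lt_Pplus {n α p : ℝ} (hn : n ≠ 0) (hα : n ^ 2 ≤ α ^ 2)
    (hlo : Pminus n α < p) (hhi : p < Pplus n α) :
    n ^ 2 * (p - 1) ^ 2 + 4 * (1 - α) ^ 2 < 4 * (1 - α) * α * (p - 1) := by
  set S := Real.sqrt (α ^ 2 - n ^ 2)
  have hS : S ^ 2 = α ^ 2 - n ^ 2 := Real.sq_sqrt (sub_nonneg.2 hα)
  have hn2 : 0 < n ^ 2 := by positivity
  have hroots : n ^ 2 * ((p - Pminus n α) * (p - Pplus n α)) =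
      n ^ 2 * (p - 1) ^ 2 + 4 * (1 - α) ^ 2 - 4 * (1 - α) * α * (p - 1) := by
    simp only [Pminus, Pplus]
    field_simp
    linear_combination (-4 * (1 - α) ^ 2) * hS
  have := mul_neg_of_pos_of_neg hn2 (mul_neg_of_pos_of_neg (sub_pos.2 hlo) (sub_neg.2 hhi))
  linarith

lemma bounds_of_mem_interior_Kset {n α p : ℝ} (h : (α, p) ∈ interior (Kset n)) :
    |n| < α ∧ α < 1 ∧ n ^ 2 * (p - 1) ^ 2 + 4 * (1 - α) ^ 2 < 4 * (1 - α) * α * (p - 1) := by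
  obtain ⟨ε, hε, hr, hl, hu, hd⟩ := exists_shifts_mem_of_mem_interior h
  by_cases hn : n = 0
  · subst hn
    simp only [Kset, if_pos, mem_ofPred_eq] at hr hl hd
    refine ⟨by rw [abs_zero]; linarith, by linarith, ?_⟩
    nlinarith
  · simp only [Kset, if_neg hn, mem_ofPred_eq] at hr hl hu hd
    refine ⟨by linarith, by linarith, quadratic_lt_of_Pminus_lt_of_lt_Pplus hn ?_ ?_ ?_⟩
    · exact sq_le_sq' (by linarith [neg_abs_le n]) (by linarith [le_abs_self n])
    · linarith
    · linarith

lemma sq_div_lt_of_quadratic_lt {n α p : ℝ} (hα : 0 < α) (hp : 1 < p)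
    (h : n ^ 2 * (p - 1) ^ 2 + 4 * (1 - α) ^ 2 < 4 * (1 - α) * α * (p - 1)) :
    (n / α) ^ 2 < 4 * ((1 - α) / (α * (p - 1))) * (1 - (1 - α) / (α * (p - 1))) := by
  have hp' : 0 < p - 1 := sub_pos.2 hp
  rw [← sub_pos]
  have : 4 * ((1 - α) / (α * (p - 1))) * (1 - (1 - α) / (α * (p - 1))) - (n / α) ^ 2 =
      (4 * (1 - α) * α * (p - 1) - n ^ 2 * (p - 1) ^ 2 - 4 * (1 - α) ^ 2) / (α * (p - 1)) ^ 2 := by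
    field_simp
    ring
  rw [this]
  apply div_pos (by linarith) (by positivity)

lemma one_lt_of_quadratic_lt {n α p : ℝ} (hα0 : 0 < α) (hα1 : α < 1)
    (h : n ^ 2 * (p - 1) ^ 2 + 4 * (1 - α) ^ 2 < 4 * (1 - α) * α * (p - 1)) : 1 < p := by
  have : 0 < (1 - α) * α * (p - 1) := by nlinarith [sq_nonneg (n * (p - 1))]
  linarith [pos_of_mul_pos_right this (mul_pos (sub_pos.2 hα1) hα0).le]

theorem Qmat_posdef_on_annulus_general (n α p : ℝ)
    (hK : (α, p) ∈ interior (Kset n)) :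
    ∀ η : ℝ, 0 < η → ∃ ν : ℝ, 0 < ν ∧ ∀ v u : ℝ, 0 < u → u < v →
      1 + η ≤ v / u → v / u < 1 + η⁻¹ →
      (Qmat n α p v u - (v ^ (n / α) * ν) • (1 : Matrix (Fin 2) (Fin 2) ℝ)).PosSemidef := by
  obtain ⟨hnα, hα1, hquad⟩ := bounds_of_mem_interior_Kset hK
  have hα0 : 0 < α := (abs_nonneg n).trans_lt hnα
  have hp : 1 < p := one_lt_of_quadratic_lt hα0 hα1 hquad
  have hγ : |n / α| ≤ 1 := by
    rw [abs_div, abs_of_pos hα0, div_le_one hα0]; exact hnα.le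
  have hΓ : 0 < (1 - α) / (α * (p - 1)) := div_pos (by linarith) (by nlinarith)
  intro η hη
  obtain ⟨μ, hμ, hN⟩ := exists_pos_normalizedQmat_sub_smul_one_posSemidef hγ hΓ
    (sq_div_lt_of_quadratic_lt hα0 hp hquad) (inv_lt_one_of_one_lt₀ (lt_add_of_pos_right 1 hη))
  refine ⟨(p - 1) * μ, by nlinarith, fun v u hu huv hvu _ => ?_⟩
  have hv : 0 < v := hu.trans huv
  have hs : u / v ≤ (1 + η)⁻¹ := by
    rw [← inv_div]; exact inv_anti₀ (by positivity) hvu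
  have hQ : Qmat n α p v u - (v ^ (n / α) * ((p - 1) * μ)) • (1 : Matrix (Fin 2) (Fin 2) ℝ) =
      ((p - 1) * v ^ (n / α)) •
        (normalizedQmat (n / α) ((1 - α) / (α * (p - 1))) (u / v) - μ • 1) := by
    rw [Qmat_eq_smul_normalizedQmat hα1.ne hv hu.le, smul_sub, smul_smul]
    ring_nf
  rw [hQ]
  exact (hN _ (div_pos hu hv) hs).smul (by positivity)

/-- Lemma: positive definiteness of `Q_{α,p}` on a relative annulus.
For `0 < |n| < 1` and `(α,p)` in the interior of `K_{|n|}`, for every `η > 0` there is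
`ν = ν(n,α,p,η) > 0` such that `Q_{α,p}(v,u) ≥ v^γ ν I₂` whenever `v > u > 0` and
`1 + η ≤ v/u < 1 + η⁻¹`. -/
theorem Qmat_posdef_on_annulus (n α p : ℝ) (hn0 : 0 < |n|) (hn1 : |n| < 1)
    (hK : (α, p) ∈ interior (Kset n)) :
    ∀ η : ℝ, 0 < η → ∃ ν : ℝ, 0 < ν ∧ ∀ v u : ℝ, 0 < u → u < v →
      1 + η ≤ v / u → v / u < 1 + η⁻¹ →
      (Qmat n α p v u - (v ^ (n / α) * ν) • (1 : Matrix (Fin 2) (Fin 2) ℝ)).PosSemidef :=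
  Qmat_posdef_on_annulus_general n α p hK
end
end

section
/- Let 0 < |n| < 1 and let (α,p) be in the interior of K_{|n|}. There exists ν₀ = ν₀(n,α,p) > 0 such that for all v ≥ u > 0, the top diagonal entry of Q_{α,p}(v,u) satisfies (Q_{α,p}(v,u))₁₁ = (p−1) v^γ (1 + Γ(u/v − 1)) ≥ v^γ ν₀. -/
open MeasureTheory Set Filter Topology

noncomputable section

set_option maxHeartbeats 1600000 in
/-- Lemma: lower bound for the top diagonal entry of `Q_{α,p}`.
For `0 < |n| < 1` and `(α,p)` in the interior of `K_{|n|}`, there is `ν₀ = ν₀(n,α,p) > 0`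
such that for all `v ≥ u > 0`, the entry
`(Q_{α,p}(v,u))₁₁ = (p-1) v^γ (1 + Γ(u/v - 1))` is at least `v^γ ν₀`. -/
theorem Qmat_top_entry_lower_bound (n α p : ℝ) (hn0 : 0 < |n|) (hn1 : |n| < 1)
    (hK : (α, p) ∈ interior (Kset n)) :
    ∃ ν₀ : ℝ, 0 < ν₀ ∧ ∀ v u : ℝ, 0 < u → u ≤ v →
      Qmat n α p v u 0 0
        = (p - 1) * (v ^ (n / α) * (1 + ((1 - α) / (α * (p - 1))) * (u / v - 1))) ∧
      v ^ (n / α) * ν₀ ≤ Qmat n α p v u 0 0 := by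
  have hn : n ≠ 0 := by
    intro h; rw [h] at hn0; simp at hn0
  have hn2 : (0:ℝ) < n ^ 2 := by positivity
  rw [mem_interior_iff_mem_nhds, Metric.mem_nhds_iff] at hK
  obtain ⟨ε, hε, hball⟩ := hK
  have hmem : ∀ q : ℝ × ℝ, dist q (α, p) < ε →
      |n| ≤ q.1 ∧ q.1 ≤ 1 ∧ Pminus n q.1 ≤ q.2 ∧ q.2 ≤ Pplus n q.1 := by
    intro q hq
    have := hball (Metric.mem_ball.mpr hq)
    simpa [Kset, hn] using this
  have hdaux : ∀ x y : ℝ, dist ((x, y) : ℝ × ℝ) (α, p) = max (dist x α) (dist y p) := by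
    intro x y; rw [Prod.dist_eq]
  have h1 := hmem (α - ε/2, p) (by
    rw [hdaux]; apply max_lt
    · rw [Real.dist_eq, show α - ε/2 - α = -(ε/2) by ring, abs_neg,
        abs_of_nonneg (by linarith)]; linarith
    · simpa using hε)
  have h2 := hmem (α + ε/2, p) (by
    rw [hdaux]; apply max_lt
    · rw [Real.dist_eq, show α + ε/2 - α = ε/2 by ring, abs_of_nonneg (by linarith)]
      linarith
    · simpa using hε)
  have h3 := hmem (α, p - ε/2) (by
    rw [hdaux]; apply max_lt
    · simpa using hε
    · rw [Real.dist_eq, show p - ε/2 - p = -(ε/2) by ring, abs_neg,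
        abs_of_nonneg (by linarith)]; linarith)
  have hαn : |n| < α := by have := h1.1; simp at this ⊢; linarith
  have hα1 : α < 1 := by have := h2.2.1; simp at this; linarith
  have hP : Pminus n α < p := by have := h3.2.2.1; simp at this; linarith
  have hα0 : 0 < α := lt_trans hn0 hαn
  set s := Real.sqrt (α ^ 2 - n ^ 2) with hs
  have hn2α : n ^ 2 < α ^ 2 := by
    have := sq_abs n; nlinarith [hn0, hαn]
  have hs2 : s ^ 2 = α ^ 2 - n ^ 2 := Real.sq_sqrt (by linarith)
  have hs0 : 0 ≤ s := Real.sqrt_nonneg _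
  have hslt : s < α := by nlinarith
  -- from Pminus < p derive 2 (1-α)(α-s) < (p-1) n²
  have hP1 : (2 / n ^ 2) * (1 - α) * (α - s) < p - 1 := by
    have : Pminus n α = 1 + (2 / n ^ 2) * (1 - α) * (α - s) := by rw [Pminus]
    linarith [hP, this ▸ hP]
  have hP' : 2 * ((1 - α) * (α - s)) < (p - 1) * n ^ 2 := by
    have h := mul_lt_mul_of_pos_right hP1 hn2
    have heq : (2 / n ^ 2) * (1 - α) * (α - s) * n ^ 2 = 2 * ((1 - α) * (α - s)) := by
      field_simp
    linarith [heq ▸ h]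
  have hkey : 1 - α < α * (p - 1) := by
    have hA := mul_lt_mul_of_pos_left hP' hα0
    have h3 : 0 < (1 - α) * (α - s) ^ 2 :=
      mul_pos (by linarith) (pow_pos (by linarith) 2)
    have e1 : α * (2 * ((1 - α) * (α - s)))
        = (1 - α) * n ^ 2 + (1 - α) * (α - s) ^ 2 := by
      linear_combination (α - 1) * hs2
    have e2 : (1 - α) * n ^ 2 < (α * (p - 1)) * n ^ 2 := by
      have : α * ((p - 1) * n ^ 2) = (α * (p - 1)) * n ^ 2 := by ring
      linarith [this ▸ hA, e1 ▸ hA]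
    exact lt_of_mul_lt_mul_right e2 hn2.le
  have hp1 : 1 < p := by
    have : 0 < α * (p - 1) := by linarith
    nlinarith [this, hα0]
  refine ⟨(p - 1) - (1 - α) / α, by
    rw [sub_pos, div_lt_iff₀ hα0]; linarith, ?_⟩
  intro v u hu huv
  have hv : 0 < v := lt_of_lt_of_le hu huv
  have hvγ : 0 < v ^ (n / α) := Real.rpow_pos_of_pos hv _
  have hcond : ¬(α = 1 ∧ p = 1) := by rintro ⟨_, h⟩; linarith
  have hQ : Qmat n α p v u 0 0
      = (p - 1) * (v ^ (n / α) * (1 + ((1 - α) / (α * (p - 1))) * (u / v - 1))) := by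
    rw [Qmat, if_neg hcond]
    simp [Matrix.smul_apply]
  refine ⟨hQ, ?_⟩
  rw [hQ]
  have ht : 0 < u / v := div_pos hu hv
  have hΓ : (p - 1) * ((1 - α) / (α * (p - 1))) = (1 - α) / α := by
    have hp0 : p - 1 ≠ 0 := sub_ne_zero_of_ne hp1.ne'
    field_simp
  have hC : 0 ≤ (1 - α) / α := div_nonneg (by linarith) hα0.le
  have key : (p - 1) - (1 - α) / α
      ≤ (p - 1) * (1 + ((1 - α) / (α * (p - 1))) * (u / v - 1)) := by
    have hexp : (p - 1) * (1 + ((1 - α) / (α * (p - 1))) * (u / v - 1))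
        = (p - 1) + ((1 - α) / α) * (u / v - 1) := by
      rw [mul_add, mul_one, ← mul_assoc, hΓ]
    rw [hexp]
    have hr : ((1 - α) / α) * (u / v - 1) = (1 - α) / α * (u / v) - (1 - α) / α := by
      ring
    rw [hr]
    linarith [mul_nonneg hC ht.le]
  calc v ^ (n / α) * ((p - 1) - (1 - α) / α)
      ≤ v ^ (n / α) * ((p - 1) * (1 + ((1 - α) / (α * (p - 1))) * (u / v - 1))) :=
        mul_le_mul_of_nonneg_left key hvγ.le
    _ = (p - 1) * (v ^ (n / α) * (1 + ((1 - α) / (α * (p - 1))) * (u / v - 1))) := by ring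
end
end

section
/- Let 0 < |n| < 1, α ∈ (0,1] and p > 1. The matrix Q_{α,p}(v,u) is positive semidefinite for all u, v > 0 if and only if (α,p) ∈ K_{|n|}. -/
open MeasureTheory Set Filter Topology

noncomputable section

/-!
Writing `t = u / v`, the matrix `Q_{α,p}(v,u)` is `(p-1) v^γ` times a matrix depending only on
`γ`, `Γ` and `t`, whose determinant condition reads `(t^γ - 1)² ≤ 4Γ(1-Γ) t^(γ-1) (t-1)²`.
Letting `t → 1` forces `γ² ≤ 4Γ(1-Γ)`. Conversely, for `t = e^(2s)` the condition becomes
`sinh²(γs) ≤ 4Γ(1-Γ) sinh² s`, which follows from `|sinh (γs)| ≤ |γ| |sinh s|` (convexity of `sinh`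
on `[0, ∞)`, as `γ² ≤ 4Γ(1-Γ) ≤ 1`). Finally, `γ² ≤ 4Γ(1-Γ)` is a quadratic inequality in `p - 1`
with roots `P_±(α) - 1`, and it forces `|n| ≤ α`.
-/

namespace Real

lemma convexOn_sinh : ConvexOn ℝ (Ici 0) sinh := by
  refine MonotoneOn.convexOn_of_deriv (convex_Ici 0) continuous_sinh.continuousOn
    differentiable_sinh.differentiableOn ?_
  rw [deriv_sinh, interior_Ici]
  intro x hx y hy hxy
  rw [cosh_le_cosh, abs_of_pos hx, abs_of_pos hy]
  exact hxy

lemma sinh_mul_le {c x : ℝ} (hc₀ : 0 ≤ c) (hc₁ : c ≤ 1) (hx : 0 ≤ x) :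
    sinh (c * x) ≤ c * sinh x := by
  simpa using convexOn_sinh.2 (mem_Ici.2 hx) (mem_Ici.2 le_rfl) hc₀ (sub_nonneg.2 hc₁)
    (add_sub_cancel c 1)

lemma abs_sinh_mul_le {c : ℝ} (hc : |c| ≤ 1) (x : ℝ) : |sinh (c * x)| ≤ |c| * |sinh x| := by
  rw [abs_sinh, abs_sinh, abs_mul]
  exact sinh_mul_le (abs_nonneg c) hc (abs_nonneg x)

lemma exp_two_mul_sub_one (x : ℝ) : exp (2 * x) - 1 = 2 * exp x * sinh x := by
  rw [sinh_eq, two_mul, exp_add, exp_neg]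
  field_simp

lemma sq_rpow_sub_one_le {γ t : ℝ} (hγ : |γ| ≤ 1) (ht : 0 < t) :
    (t ^ γ - 1) ^ 2 ≤ γ ^ 2 * t ^ (γ - 1) * (t - 1) ^ 2 := by
  obtain ⟨s, rfl⟩ : ∃ s, t = exp (2 * s) :=
    ⟨log t / 2, by rw [mul_div_cancel₀ _ two_ne_zero, exp_log ht]⟩
  have hsinh : sinh (γ * s) ^ 2 ≤ γ ^ 2 * sinh s ^ 2 := by
    simpa only [sq_abs, mul_pow] using pow_le_pow_left₀ (abs_nonneg _) (abs_sinh_mul_le hγ s) 2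
  have hpow : exp (2 * s) ^ γ = exp (2 * (γ * s)) := by rw [← exp_mul]; ring_nf
  have hpow' : exp (2 * s) ^ (γ - 1) = exp (γ * s) ^ 2 / exp s ^ 2 := by
    rw [← exp_mul, mul_sub, mul_one, exp_sub, ← exp_nat_mul, ← exp_nat_mul]; ring_nf
  rw [hpow, hpow', exp_two_mul_sub_one, exp_two_mul_sub_one]
  have := exp_pos s
  field_simp
  nlinarith [exp_pos (γ * s)]

end Real

lemma tendsto_rpow_sub_one_div_sub_one (γ : ℝ) :
    Tendsto (fun t : ℝ => (t ^ γ - 1) / (t - 1)) (𝓝[≠] 1) (𝓝 γ) := by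
  have h := hasDerivAt_iff_tendsto_slope.1
    (Real.hasDerivAt_rpow_const (x := 1) (p := γ) (Or.inl one_ne_zero))
  simp only [Real.one_rpow, mul_one] at h
  refine h.congr fun t => ?_
  rw [slope_def_field, Real.one_rpow]

lemma forall_sq_rpow_sub_one_le_iff {γ c : ℝ} (hc : c ≤ 1) :
    (∀ t > 0, (t ^ γ - 1) ^ 2 ≤ c * t ^ (γ - 1) * (t - 1) ^ 2) ↔ γ ^ 2 ≤ c := by
  constructor
  · intro h
    have hlim : Tendsto (fun t : ℝ => c * t ^ (γ - 1)) (𝓝[≠] 1) (𝓝 c) := by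
      simpa using ((Real.continuousAt_rpow_const 1 (γ - 1) (Or.inl one_ne_zero)).tendsto.mono_left
        nhdsWithin_le_nhds).const_mul c
    refine le_of_tendsto_of_tendsto ((tendsto_rpow_sub_one_div_sub_one γ).pow 2) hlim ?_
    filter_upwards [self_mem_nhdsWithin, nhdsWithin_le_nhds (lt_mem_nhds one_pos)]
      with t (ht1 : t ≠ 1) ht
    rw [div_pow, div_le_iff₀ (by have := sub_ne_zero.2 ht1; positivity)]
    exact h t ht
  · intro h t ht
    have hγ : |γ| ≤ 1 := (sq_le_one_iff_abs_le_one γ).1 (h.trans hc)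
    calc (t ^ γ - 1) ^ 2 ≤ γ ^ 2 * t ^ (γ - 1) * (t - 1) ^ 2 := Real.sq_rpow_sub_one_le hγ ht
      _ ≤ c * t ^ (γ - 1) * (t - 1) ^ 2 := by gcongr

namespace Matrix

lemma posSemidef_fin_two_iff {a b d : ℝ} :
    (!![a, b; b, d] : Matrix (Fin 2) (Fin 2) ℝ).PosSemidef ↔ 0 ≤ a ∧ 0 ≤ d ∧ b ^ 2 ≤ a * d := by
  have hform : ∀ x : Fin 2 → ℝ, star x ⬝ᵥ (!![a, b; b, d] *ᵥ x) =
      a * (x 0 * x 0) + 2 * b * x 0 * x 1 + d * (x 1 * x 1) := fun x => by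
    simp only [dotProduct, Pi.star_apply, star_trivial, mulVec, of_apply, cons_val',
      cons_val_fin_one, Fin.sum_univ_two, cons_val_zero, cons_val_one]
    ring
  have hherm : (!![a, b; b, d] : Matrix (Fin 2) (Fin 2) ℝ).IsHermitian := by
    ext i j; fin_cases i <;> fin_cases j <;> rfl
  simp only [posSemidef_iff_dotProduct_mulVec, hherm, true_and, hform]
  constructor
  · intro h
    have ha := h ![1, 0]
    have hd := h ![0, 1]
    have hdisc := discrim_le_zero fun x => by simpa using h ![x, 1]
    simp only [cons_val_zero, cons_val_one] at ha hd
    refine ⟨by simpa using ha, by simpa using hd, ?_⟩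
    rw [discrim] at hdisc
    linarith
  · rintro ⟨ha, hd, hb⟩ x
    have hsum : 0 ≤ (a + d) * (a * (x 0 * x 0) + 2 * b * x 0 * x 1 + d * (x 1 * x 1)) := by
      nlinarith [sq_nonneg (a * x 0 + b * x 1), sq_nonneg (b * x 0 + d * x 1),
        mul_nonneg (sub_nonneg.2 hb) (add_nonneg (sq_nonneg (x 0)) (sq_nonneg (x 1)))]
    rcases (add_nonneg ha hd).eq_or_lt with had | had
    · obtain ⟨rfl, rfl⟩ : a = 0 ∧ d = 0 := ⟨by linarith, by linarith⟩
      obtain rfl : b = 0 := by nlinarith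
      simp
    · exact (mul_nonneg_iff_of_pos_left had).1 hsum

lemma posSemidef_smul_iff {m : Type*} [Fintype m] {M : Matrix m m ℝ} {c : ℝ} (hc : 0 < c) :
    (c • M).PosSemidef ↔ M.PosSemidef :=
  ⟨fun h => by simpa [smul_smul, inv_mul_cancel₀ hc.ne'] using h.smul (inv_nonneg.2 hc.le),
    fun h => h.smul hc.le⟩

end Matrix

def QmatNormalized (γ Γ t : ℝ) : Matrix (Fin 2) (Fin 2) ℝ :=
  !![1 + Γ * (t - 1), -(1 + t ^ γ) / 2; -(1 + t ^ γ) / 2, t ^ γ * (1 + Γ * (1 / t - 1))]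

lemma Qmat_eq_smul_QmatNormalized (n a : ℝ) {p u v : ℝ} (hp : p ≠ 1) (hu : 0 < u) (hv : 0 < v) :
    Qmat n a p v u =
      ((p - 1) * v ^ (n / a)) • QmatNormalized (n / a) ((1 - a) / (a * (p - 1))) (u / v) := by
  have hvγ : v ^ (n / a) ≠ 0 := (Real.rpow_pos_of_pos hv _).ne'
  rw [Qmat, if_neg fun h => hp h.2, mul_smul, QmatNormalized, Real.div_rpow hu.le hv.le]
  congr 1
  ext i j
  fin_cases i <;> fin_cases j <;>
    simp only [Matrix.smul_apply, smul_eq_mul, Matrix.of_apply, Matrix.cons_val',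
      Matrix.cons_val_zero, Matrix.cons_val_one, Matrix.cons_val_fin_one, Fin.zero_eta,
      Fin.mk_one] <;>
    field_simp

lemma QmatNormalized_posSemidef_iff {γ Γ t : ℝ} (ht : 0 < t) :
    (QmatNormalized γ Γ t).PosSemidef ↔ 0 ≤ 1 + Γ * (t - 1) ∧ 0 ≤ t ^ γ * (1 + Γ * (1 / t - 1)) ∧
      (t ^ γ - 1) ^ 2 ≤ 4 * (Γ * (1 - Γ)) * t ^ (γ - 1) * (t - 1) ^ 2 := by
  have hdet : (1 + Γ * (t - 1)) * (t ^ γ * (1 + Γ * (1 / t - 1))) - (-(1 + t ^ γ) / 2) ^ 2 =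
      (4 * (Γ * (1 - Γ)) * t ^ (γ - 1) * (t - 1) ^ 2 - (t ^ γ - 1) ^ 2) / 4 := by
    rw [Real.rpow_sub_one ht.ne']
    field_simp
    ring
  rw [QmatNormalized, Matrix.posSemidef_fin_two_iff]
  refine and_congr_right' (and_congr_right' ?_)
  constructor <;> intro h <;> linarith

lemma forall_QmatNormalized_posSemidef_iff (γ Γ : ℝ) :
    (∀ t > 0, (QmatNormalized γ Γ t).PosSemidef) ↔ γ ^ 2 ≤ 4 * (Γ * (1 - Γ)) := by
  have hc : 4 * (Γ * (1 - Γ)) ≤ 1 := by nlinarith [sq_nonneg (2 * Γ - 1)]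
  constructor
  · rw [← forall_sq_rpow_sub_one_le_iff hc]
    exact fun h t ht => ((QmatNormalized_posSemidef_iff ht).1 (h t ht)).2.2
  · intro h t ht
    have hΓ : 0 ≤ Γ * (1 - Γ) := by nlinarith [sq_nonneg γ]
    obtain ⟨hΓ₀, hΓ₁⟩ : 0 ≤ Γ ∧ Γ ≤ 1 := by constructor <;> nlinarith
    rw [QmatNormalized_posSemidef_iff ht]
    refine ⟨by nlinarith, ?_, (forall_sq_rpow_sub_one_le_iff hc).2 h t ht⟩
    refine mul_nonneg (Real.rpow_nonneg ht.le γ) ?_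
    have : 0 ≤ Γ * (1 / t) := by positivity
    linarith

lemma sq_div_le_four_mul_iff {n a p : ℝ} (ha : 0 < a) (hp : 1 < p) :
    (n / a) ^ 2 ≤ 4 * ((1 - a) / (a * (p - 1)) * (1 - (1 - a) / (a * (p - 1)))) ↔
      n ^ 2 * (p - 1) ^ 2 - 4 * a * (1 - a) * (p - 1) + 4 * (1 - a) ^ 2 ≤ 0 := by
  have hq : 0 < p - 1 := sub_pos.2 hp
  have h : 4 * ((1 - a) / (a * (p - 1)) * (1 - (1 - a) / (a * (p - 1)))) - (n / a) ^ 2 =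
      -(n ^ 2 * (p - 1) ^ 2 - 4 * a * (1 - a) * (p - 1) + 4 * (1 - a) ^ 2) / (a * (p - 1)) ^ 2 := by
    field_simp
    ring
  rw [← sub_nonneg, h, neg_div, neg_nonneg, div_nonpos_iff]
  have : 0 < (a * (p - 1)) ^ 2 := by positivity
  constructor
  · rintro (⟨-, h⟩ | ⟨h, -⟩) <;> linarith
  · exact fun h => Or.inr ⟨h, this.le⟩

lemma Pminus_le_Pplus {n a : ℝ} (ha : a ≤ 1) : Pminus n a ≤ Pplus n a := by
  unfold Pminus Pplus
  have : 0 ≤ 2 / n ^ 2 * (1 - a) := by have := sub_nonneg.2 ha; positivity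
  nlinarith [Real.sqrt_nonneg (a ^ 2 - n ^ 2)]

lemma quadratic_eq_mul_sub_Pminus_mul_sub_Pplus {n a : ℝ} (hn : n ≠ 0) (hna : n ^ 2 ≤ a ^ 2)
    (p : ℝ) : n ^ 2 * (p - 1) ^ 2 - 4 * a * (1 - a) * (p - 1) + 4 * (1 - a) ^ 2 =
      n ^ 2 * (p - Pminus n a) * (p - Pplus n a) := by
  have hs := Real.sq_sqrt (sub_nonneg.2 hna)
  unfold Pminus Pplus
  field_simp
  linear_combination 4 * (1 - a) ^ 2 * hs

lemma mem_Kset_iff {n a p : ℝ} (hn : n ≠ 0) (ha : a ≤ 1) (hp : 1 < p) :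
    (a, p) ∈ Kset n ↔ n ^ 2 * (p - 1) ^ 2 - 4 * a * (1 - a) * (p - 1) + 4 * (1 - a) ^ 2 ≤ 0 := by
  have hn2 : 0 < n ^ 2 := by positivity
  have hP := Pminus_le_Pplus (n := n) ha
  simp only [Kset, if_neg hn, mem_ofPred_eq, ha, true_and]
  constructor
  · rintro ⟨hna, hlo, hhi⟩
    rw [quadratic_eq_mul_sub_Pminus_mul_sub_Pplus hn (sq_le_sq' (abs_le.1 hna).1 (abs_le.1 hna).2)]
    exact mul_nonpos_of_nonneg_of_nonpos (mul_nonneg hn2.le (sub_nonneg.2 hlo)) (sub_nonpos.2 hhi)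
  · intro h
    have hq : 0 < p - 1 := sub_pos.2 hp
    have hna : n ^ 2 ≤ a ^ 2 := by
      refine le_of_mul_le_mul_right ?_ (pow_pos hq 2)
      nlinarith [sq_nonneg (a * (p - 1) - 2 * (1 - a))]
    have ha₀ : 0 ≤ a := by nlinarith
    rw [quadratic_eq_mul_sub_Pminus_mul_sub_Pplus hn hna, mul_assoc] at h
    replace h := nonpos_of_mul_nonpos_right h hn2
    refine ⟨abs_le_of_sq_le_sq hna ha₀, ?_, ?_⟩ <;> nlinarith

theorem Qmat_posSemidef_iff_general (n α p : ℝ) (hn0 : 0 < |n|)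
    (hα : α ∈ Ioc (0:ℝ) 1) (hp : 1 < p) :
    (∀ u v : ℝ, 0 < u → 0 < v → (Qmat n α p v u).PosSemidef) ↔ (α, p) ∈ Kset n := by
  rw [mem_Kset_iff (abs_pos.1 hn0) hα.2 hp, ← sq_div_le_four_mul_iff hα.1 hp,
    ← forall_QmatNormalized_posSemidef_iff]
  have hq : 0 < p - 1 := sub_pos.2 hp
  constructor
  · intro h t ht
    simpa only [Qmat_eq_smul_QmatNormalized n α hp.ne' ht one_pos, Real.one_rpow, mul_one,
      div_one, Matrix.posSemidef_smul_iff hq] using h t 1 ht one_pos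
  · intro h u v hu hv
    rw [Qmat_eq_smul_QmatNormalized n α hp.ne' hu hv]
    exact (h _ (div_pos hu hv)).smul (by positivity)

/-- for `0 < |n| < 1`, `α ∈ (0,1]` and `p > 1`, the matrix `Q_{α,p}(v,u)`
is positive semidefinite for all `u, v > 0` if and only if `(α,p) ∈ K_{|n|}`. -/
theorem Qmat_posSemidef_iff (n α p : ℝ) (hn0 : 0 < |n|) (hn1 : |n| < 1)
    (hα : α ∈ Ioc (0:ℝ) 1) (hp : 1 < p) :
    (∀ u v : ℝ, 0 < u → 0 < v → (Qmat n α p v u).PosSemidef) ↔ (α, p) ∈ Kset n :=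
  Qmat_posSemidef_iff_general n α p hn0 hα hp

end
end

section
/- Let 0 < |n| < 1, α ∈ (0,1), p > 1, γ = n/α, Γ = (1−α)/(α(p−1)). For v > u > 0 and w = u/v ∈ (0,1], one has det Q_{α,p}(v,u) > 0 if and only if G_γ(w) := Γ(1−Γ) f₁(w) − (1/4) f_γ(w) > 0, where f_γ(w) := w^γ − 2 + w^{−γ}. -/
open MeasureTheory Set Filter Topology

noncomputable section

/-- determinant criterion: for `0 < |n| < 1`, `α ∈ (0,1)`, `p > 1`,
`v > u > 0` and `w = u/v ∈ (0,1]`, one has `det Q_{α,p}(v,u) > 0` iff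
`G_γ(w) = Γ(1-Γ) f₁(w) - (1/4) f_γ(w) > 0`, where `f_γ(w) = w^γ - 2 + w^{-γ}` and
`γ = n/α`, `Γ = (1-α)/(α(p-1))`. -/
theorem det_Qmat_pos_iff (n α p : ℝ) (hn0 : 0 < |n|) (hn1 : |n| < 1)
    (hα : α ∈ Ioo (0:ℝ) 1) (hp : 1 < p) (v u : ℝ) (hu : 0 < u) (huv : u < v) :
    0 < (Qmat n α p v u).det ↔
      0 < ((1 - α) / (α * (p - 1))) * (1 - (1 - α) / (α * (p - 1)))
            * ((u / v) ^ (1:ℝ) - 2 + (u / v) ^ (-1:ℝ))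
          - (1 / 4) * ((u / v) ^ (n / α) - 2 + (u / v) ^ (-(n / α))) := by
  have hα0 := hα.1
  have hα1 := hα.2
  have hv : 0 < v := hu.trans huv
  have hne : ¬(α = 1 ∧ p = 1) := fun h => absurd h.1 (ne_of_lt hα1)
  have hp1 : (0:ℝ) < p - 1 := by linarith
  have huγ : 0 < u ^ (n / α) := Real.rpow_pos_of_pos hu _
  have hvγ : 0 < v ^ (n / α) := Real.rpow_pos_of_pos hv _
  have hwγ : (u/v) ^ (n / α) = u ^ (n / α) / v ^ (n / α) := Real.div_rpow hu.le hv.le _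
  have hwγ' : (u/v) ^ (-(n / α)) = v ^ (n / α) / u ^ (n / α) := by
    rw [Real.rpow_neg (by positivity), hwγ, inv_div]
  have h1 : (u/v) ^ (1:ℝ) = u / v := Real.rpow_one _
  have hm1 : (u/v) ^ (-1:ℝ) = v / u := by
    rw [Real.rpow_neg_one, inv_div]
  have hdet : (Qmat n α p v u).det
      = (p-1)^2 * (u ^ (n / α) * v ^ (n / α)) *
        (((1 - α) / (α * (p - 1))) * (1 - (1 - α) / (α * (p - 1)))
            * ((u / v) ^ (1:ℝ) - 2 + (u / v) ^ (-1:ℝ))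
          - (1 / 4) * ((u / v) ^ (n / α) - 2 + (u / v) ^ (-(n / α)))) := by
    rw [Qmat, if_neg hne, Matrix.det_smul, Matrix.det_fin_two_of]
    rw [hwγ, hwγ', h1, hm1]
    have : (Fintype.card (Fin 2)) = 2 := rfl
    rw [this]
    field_simp
    ring
  have hC : 0 < (p-1)^2 * (u ^ (n / α) * v ^ (n / α)) := by positivity
  rw [hdet]
  constructor
  · intro h
    by_contra hG
    push_neg at hG
    nlinarith
  · intro h
    exact mul_pos hC h
end
end

section
/- Let |γ| < 1 and let Γ ∈ ℝ satisfy Γ_− < Γ < Γ_+, where Γ_± = (1 ± √(1−γ²))/2. Define G_γ(w) = Γ(1−Γ) f₁(w) − (1/4) f_γ(w) on (0,1], where f_γ(w) = w^γ − 2 + w^{−γ} and f₁(w) = w − 2 + w^{−1}. Then G_γ(1) = G_γ'(1) = 0, G_γ is strictly convex on (0,1], and consequently G_γ(w) > 0 for all w ∈ (0,1). -/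
/-!
Write `c = Γ(1-Γ)`; the bounds on `Γ` say exactly that `c > γ²/4`. For `|p| ≤ 1` weighted AM–GM
gives `w³ f_p''(w) = p(p-1)w^{1+p} + p(p+1)w^{1-p} ≤ 2p²` for every `w > 0`, hence
`w³ G''(w) ≥ 2c - γ²/2 > 0` and `G` is strictly convex on all of `(0, ∞)`. A strictly convex
function lies strictly above its tangent at `1`, which is the zero line.
-/

open Set

noncomputable section

theorem strictConvexOn_of_hasDerivAt_of_hasDerivAt_pos {D : Set ℝ} (hD : Convex ℝ D)
    {f f' f'' : ℝ → ℝ} (hf : ∀ x ∈ D, HasDerivAt f (f' x) x)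
    (hf' : ∀ x ∈ D, HasDerivAt f' (f'' x) x) (hf'' : ∀ x ∈ D, 0 < f'' x) :
    StrictConvexOn ℝ D f := by
  have hmono : StrictMonoOn f' D :=
    strictMonoOn_of_hasDerivWithinAt_pos hD
      (fun x hx => (hf' x hx).continuousAt.continuousWithinAt)
      (fun x hx => (hf' x (interior_subset hx)).hasDerivWithinAt)
      (fun x hx => hf'' x (interior_subset hx))
  refine StrictMonoOn.strictConvexOn_of_deriv hD
    (fun x hx => (hf x hx).continuousAt.continuousWithinAt) ?_
  exact (hmono.mono interior_subset).congr fun x hx => ((hf x (interior_subset hx)).deriv).symm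

theorem Real.one_add_mul_rpow_one_sub_le {p y : ℝ} (hp₀ : 0 ≤ p) (hp₁ : p ≤ 1) (hy : 0 ≤ y) :
    (1 + p) * y ^ (1 - p) ≤ 2 * p + (1 - p) * y ^ (1 + p) := by
  have hp : 0 < 1 + p := by linarith
  have hamgm := Real.geom_mean_le_arith_mean2_weighted (w₁ := 2 * p / (1 + p))
    (w₂ := (1 - p) / (1 + p)) (p₁ := 1) (p₂ := y ^ (1 + p))
    (div_nonneg (by linarith) hp.le) (div_nonneg (by linarith) hp.le) zero_le_one
    (by positivity) (by field_simp; ring)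
  rw [Real.one_rpow, one_mul, ← Real.rpow_mul hy, mul_div_cancel₀ _ hp.ne'] at hamgm
  calc (1 + p) * y ^ (1 - p)
      ≤ (1 + p) * (2 * p / (1 + p) * 1 + (1 - p) / (1 + p) * y ^ (1 + p)) := by gcongr
    _ = 2 * p + (1 - p) * y ^ (1 + p) := by field_simp

theorem Real.mul_rpow_one_add_add_mul_rpow_one_sub_le {p y : ℝ} (hp : |p| ≤ 1) (hy : 0 ≤ y) :
    p * (p - 1) * y ^ (1 + p) + p * (p + 1) * y ^ (1 - p) ≤ 2 * p ^ 2 := by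
  obtain ⟨hp₁, hp₂⟩ := abs_le.mp hp
  rcases le_total 0 p with hp₀ | hp₀
  · nlinarith [Real.one_add_mul_rpow_one_sub_le hp₀ hp₂ hy]
  · have := Real.one_add_mul_rpow_one_sub_le (p := -p) (by linarith) (by linarith) hy
    rw [sub_neg_eq_add, ← sub_eq_add_neg] at this
    nlinarith

namespace Ggamma

def f (p w : ℝ) : ℝ := w ^ p - 2 + w ^ (-p)

def f' (p w : ℝ) : ℝ := p * w ^ (p - 1) - p * w ^ (-p - 1)

def f'' (p w : ℝ) : ℝ := p * (p - 1) * w ^ (p - 2) + p * (p + 1) * w ^ (-p - 2)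

def G (c γ w : ℝ) : ℝ := c * f 1 w - 1 / 4 * f γ w

variable {p x : ℝ}

theorem f_one_left (w : ℝ) : f 1 w = w - 2 + w⁻¹ := by
  rw [f, Real.rpow_one, Real.rpow_neg_one]

@[simp] theorem f_one_right : f p 1 = 0 := by norm_num [f]

@[simp] theorem f'_one_right : f' p 1 = 0 := by simp [f']

theorem hasDerivAt_f (hx : 0 < x) : HasDerivAt (f p) (f' p x) x :=
  ((Real.hasDerivAt_rpow_const (Or.inl hx.ne')).sub_const 2).add
    (Real.hasDerivAt_rpow_const (Or.inl hx.ne')) |>.congr_deriv (by rw [f']; ring)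

theorem hasDerivAt_f' (hx : 0 < x) : HasDerivAt (f' p) (f'' p x) x := by
  have h := ((Real.hasDerivAt_rpow_const (p := p - 1) (Or.inl hx.ne')).const_mul p).sub
    ((Real.hasDerivAt_rpow_const (p := -p - 1) (Or.inl hx.ne')).const_mul p)
  refine h.congr_deriv ?_
  rw [f'']
  ring_nf

theorem f''_one_left (x : ℝ) : f'' 1 x = 2 * x ^ (-3 : ℝ) := by
  norm_num [f'']

theorem f''_le (hp : |p| ≤ 1) (hx : 0 < x) : f'' p x ≤ 2 * p ^ 2 * x ^ (-3 : ℝ) := by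
  have h₁ : x ^ (p - 2) = x ^ (-3 : ℝ) * x ^ (1 + p) := by
    rw [← Real.rpow_add hx]; ring_nf
  have h₂ : x ^ (-p - 2) = x ^ (-3 : ℝ) * x ^ (1 - p) := by
    rw [← Real.rpow_add hx]; ring_nf
  have := Real.mul_rpow_one_add_add_mul_rpow_one_sub_le hp hx.le
  have h₃ : 0 < x ^ (-3 : ℝ) := Real.rpow_pos_of_pos hx _
  rw [f'', h₁, h₂]
  nlinarith

theorem hasDerivAt_G {c γ : ℝ} (hx : 0 < x) :
    HasDerivAt (G c γ) (c * f' 1 x - 1 / 4 * f' γ x) x :=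
  ((hasDerivAt_f hx).const_mul c).sub ((hasDerivAt_f hx).const_mul (1 / 4))

theorem strictConvexOn_G {c γ : ℝ} (hγ : |γ| ≤ 1) (hc : γ ^ 2 / 4 < c) :
    StrictConvexOn ℝ (Ioi 0) (G c γ) := by
  refine strictConvexOn_of_hasDerivAt_of_hasDerivAt_pos (convex_Ioi 0)
    (fun x hx => hasDerivAt_G hx)
    (fun x hx => ((hasDerivAt_f' hx).const_mul c).sub ((hasDerivAt_f' hx).const_mul (1 / 4)))
    fun x hx => ?_
  have h₃ : 0 < x ^ (-3 : ℝ) := Real.rpow_pos_of_pos hx _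
  rw [f''_one_left]
  nlinarith [f''_le hγ hx]

end Ggamma

theorem sq_div_four_lt_mul_one_sub {γ Γ : ℝ}
    (hΓlow : (1 - Real.sqrt (1 - γ ^ 2)) / 2 < Γ)
    (hΓhigh : Γ < (1 + Real.sqrt (1 - γ ^ 2)) / 2) :
    γ ^ 2 / 4 < Γ * (1 - Γ) := by
  have h₁ : |Γ - 1 / 2| < Real.sqrt (1 - γ ^ 2) / 2 :=
    abs_sub_lt_iff.mpr ⟨by linarith, by linarith⟩
  have h : (2 * |Γ - 1 / 2|) ^ 2 < 1 - γ ^ 2 :=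
    (Real.lt_sqrt (by positivity)).mp (by linarith)
  nlinarith [sq_abs (Γ - 1 / 2)]

/-- for `|γ| < 1` and `Γ_- < Γ < Γ_+` with `Γ_± = (1 ± √(1-γ²))/2`,
the function `G_γ(w) = Γ(1-Γ)f₁(w) - (1/4)f_γ(w)` (with `f_γ(w) = w^γ - 2 + w^{-γ}`,
`f₁(w) = w - 2 + w⁻¹`) satisfies `G_γ(1) = G_γ'(1) = 0`, is strictly convex on `(0,1]`,
and consequently `G_γ(w) > 0` for all `w ∈ (0,1)`. -/
theorem Ggamma_strictConvexOn_and_pos (γ Γ : ℝ) (hγ : |γ| < 1)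
    (hΓlow : (1 - Real.sqrt (1 - γ ^ 2)) / 2 < Γ)
    (hΓhigh : Γ < (1 + Real.sqrt (1 - γ ^ 2)) / 2)
    (G : ℝ → ℝ)
    (hG : G = fun w => Γ * (1 - Γ) * (w - 2 + w⁻¹) - (1 / 4) * (w ^ γ - 2 + w ^ (-γ))) :
    G 1 = 0 ∧ deriv G 1 = 0 ∧ StrictConvexOn ℝ (Ioc (0:ℝ) 1) G ∧
      ∀ w ∈ Ioo (0:ℝ) 1, 0 < G w := by
  obtain rfl : G = Ggamma.G (Γ * (1 - Γ)) γ := by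
    rw [hG]; funext w; rw [Ggamma.G, Ggamma.f_one_left]; rfl
  have hconv := Ggamma.strictConvexOn_G hγ.le (sq_div_four_lt_mul_one_sub hΓlow hΓhigh)
  have hG1 : Ggamma.G (Γ * (1 - Γ)) γ 1 = 0 := by simp [Ggamma.G]
  have hderiv : HasDerivAt (Ggamma.G (Γ * (1 - Γ)) γ) 0 1 := by
    simpa using Ggamma.hasDerivAt_G (c := Γ * (1 - Γ)) (γ := γ) one_pos
  refine ⟨hG1, hderiv.deriv, hconv.subset Ioc_subset_Ioi_self (convex_Ioc 0 1), fun w hw => ?_⟩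
  have hslope := hconv.slope_lt_of_hasDerivAt hw.1 (mem_Ioi.mpr one_pos) hw.2 hderiv
  rw [slope_def_field, hG1, div_lt_iff₀ (sub_pos.mpr hw.2), zero_mul] at hslope
  linarith
end
end

section
/- Let 0 < |n| < 1, α ∈ (0,1), p > 1, and set γ = n/α, Γ = (1−α)/(α(p−1)), Γ_± = (1 ± √(1−γ²))/2. Then Γ_− < Γ < Γ_+ if and only if (α,p) lies in the interior of K_{|n|}. -/
open MeasureTheory Set Filter Topology

noncomputable section

lemma continuous_Pminus (n : ℝ) : Continuous (Pminus n) := by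
  unfold Pminus; continuity

lemma continuous_Pplus (n : ℝ) : Continuous (Pplus n) := by
  unfold Pplus; continuity

lemma interior_Kset (n : ℝ) (hn : n ≠ 0) :
    interior (Kset n) =
      {q : ℝ × ℝ | |n| < q.1 ∧ q.1 < 1 ∧ Pminus n q.1 < q.2 ∧ q.2 < Pplus n q.1} := by
  apply subset_antisymm
  · intro q hq
    rw [mem_interior_iff_mem_nhds, Metric.mem_nhds_iff] at hq
    obtain ⟨ε, hε, hball⟩ := hq
    have hK : ∀ x y : ℝ, dist x q.1 < ε → dist y q.2 < ε →
        |n| ≤ x ∧ x ≤ 1 ∧ Pminus n x ≤ y ∧ y ≤ Pplus n x := by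
      intro x y hx hy
      have : (x, y) ∈ Kset n := hball (by rw [Metric.mem_ball, Prod.dist_eq]; exact max_lt hx hy)
      simpa [Kset, hn] using this
    have hd : ∀ z : ℝ, dist (z - ε/2) z < ε := by
      intro z; rw [Real.dist_eq]
      rw [show z - ε/2 - z = -(ε/2) by ring, abs_neg, abs_of_pos (by linarith)]; linarith
    have hd' : ∀ z : ℝ, dist (z + ε/2) z < ε := by
      intro z; rw [Real.dist_eq]
      rw [show z + ε/2 - z = ε/2 by ring, abs_of_pos (by linarith)]; linarith
    have h1 := hK (q.1 - ε/2) q.2 (hd q.1) (by simpa using hε)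
    have h2 := hK (q.1 + ε/2) q.2 (hd' q.1) (by simpa using hε)
    have h3 := hK q.1 (q.2 - ε/2) (by simpa using hε) (hd q.2)
    have h4 := hK q.1 (q.2 + ε/2) (by simpa using hε) (hd' q.2)
    exact ⟨by linarith [h1.1], by linarith [h2.2.1], by linarith [h4.2.2.1], by linarith [h3.2.2.2]⟩
  · apply interior_maximal
    · intro q hq
      simp only [Set.mem_setOf_eq] at hq
      simp only [Kset, if_neg hn, Set.mem_setOf_eq]
      exact ⟨hq.1.le, hq.2.1.le, hq.2.2.1.le, hq.2.2.2.le⟩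
    · have : IsOpen ({q : ℝ × ℝ | |n| < q.1} ∩ ({q | q.1 < 1} ∩
          ({q | Pminus n q.1 < q.2} ∩ {q | q.2 < Pplus n q.1}))) := by
        refine (isOpen_lt continuous_const continuous_fst).inter
          ((isOpen_lt continuous_fst continuous_const).inter
          ((isOpen_lt ((continuous_Pminus n).comp continuous_fst) continuous_snd).inter
          (isOpen_lt continuous_snd ((continuous_Pplus n).comp continuous_fst))))
      exact this

lemma Gamma_algebra (n α p : ℝ) (hn0 : 0 < |n|)
    (hα0 : 0 < α) (hα1 : α < 1) (hp : 1 < p) (hna : |n| < α) :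
    ((1 - Real.sqrt (1 - (n / α) ^ 2)) / 2 < (1 - α) / (α * (p - 1)) ∧
      (1 - α) / (α * (p - 1)) < (1 + Real.sqrt (1 - (n / α) ^ 2)) / 2)
    ↔ (Pminus n α < p ∧ p < Pplus n α) := by
  have hn : n ≠ 0 := by intro h; simp [h] at hn0
  have hn2 : 0 < n ^ 2 := by positivity
  have hn2a : n ^ 2 < α ^ 2 := by nlinarith [sq_abs n, abs_nonneg n]
  set s := Real.sqrt (α ^ 2 - n ^ 2) with hs
  have hs2 : s ^ 2 = α ^ 2 - n ^ 2 := Real.sq_sqrt (by linarith)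
  have hs0 : 0 < s := Real.sqrt_pos.mpr (by linarith)
  have hsa : s < α := by nlinarith
  have hsq : Real.sqrt (1 - (n / α) ^ 2) = s / α := by
    rw [show 1 - (n / α) ^ 2 = (α ^ 2 - n ^ 2) / α ^ 2 by field_simp]
    rw [Real.sqrt_div (by linarith), Real.sqrt_sq hα0.le]
  have hap : 0 < α * (p - 1) := mul_pos hα0 (by linarith)
  rw [hsq]
  unfold Pminus Pplus
  constructor
  · rintro ⟨h1, h2⟩
    rw [div_lt_div_iff₀ (by norm_num) hap] at h1
    rw [div_lt_div_iff₀ hap (by norm_num)] at h2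
    have e1 : (1 - s / α) * (α * (p - 1)) = (α - s) * (p - 1) := by field_simp
    have e2 : (1 + s / α) * (α * (p - 1)) = (α + s) * (p - 1) := by field_simp
    rw [e1] at h1; rw [e2] at h2
    constructor
    · have key : 2 * (1 - α) * (α - s) < (p - 1) * n ^ 2 := by nlinarith
      have : 2 / n ^ 2 * (1 - α) * (α - s) < p - 1 := by
        rw [show 2 / n ^ 2 * (1 - α) * (α - s) = 2 * (1 - α) * (α - s) / n ^ 2 by ring,
          div_lt_iff₀ hn2]; linarith
      linarith
    · have key : (p - 1) * n ^ 2 < 2 * (1 - α) * (α + s) := by nlinarith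
      have : p - 1 < 2 / n ^ 2 * (1 - α) * (α + s) := by
        rw [show 2 / n ^ 2 * (1 - α) * (α + s) = 2 * (1 - α) * (α + s) / n ^ 2 by ring,
          lt_div_iff₀ hn2]; linarith
      linarith
  · rintro ⟨h1, h2⟩
    have h1' : 2 * (1 - α) * (α - s) < (p - 1) * n ^ 2 := by
      have : 2 / n ^ 2 * (1 - α) * (α - s) < p - 1 := by linarith
      rw [show 2 / n ^ 2 * (1 - α) * (α - s) = 2 * (1 - α) * (α - s) / n ^ 2 by ring,
        div_lt_iff₀ hn2] at this; linarith
    have h2' : (p - 1) * n ^ 2 < 2 * (1 - α) * (α + s) := by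
      have : p - 1 < 2 / n ^ 2 * (1 - α) * (α + s) := by linarith
      rw [show 2 / n ^ 2 * (1 - α) * (α + s) = 2 * (1 - α) * (α + s) / n ^ 2 by ring,
        lt_div_iff₀ hn2] at this; linarith
    constructor
    · rw [div_lt_div_iff₀ (by norm_num) hap,
        show (1 - s / α) * (α * (p - 1)) = (α - s) * (p - 1) by field_simp]
      nlinarith
    · rw [div_lt_div_iff₀ hap (by norm_num),
        show (1 + s / α) * (α * (p - 1)) = (α + s) * (p - 1) by field_simp]
      nlinarith

/-- for `0 < |n| < 1`, `α ∈ (0,1)`, `p > 1`, with `γ = n/α` and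
`Γ = (1-α)/(α(p-1))`, one has `Γ_- < Γ < Γ_+` (where `Γ_± = (1 ± √(1-γ²))/2`) if and
only if `(α,p)` lies in the interior of `K_{|n|}`. -/
theorem Gamma_strictly_between_iff_interior (n α p : ℝ) (hn0 : 0 < |n|) (hn1 : |n| < 1)
    (hα : α ∈ Ioo (0:ℝ) 1) (hp : 1 < p) :
    ((1 - Real.sqrt (1 - (n / α) ^ 2)) / 2 < (1 - α) / (α * (p - 1)) ∧
      (1 - α) / (α * (p - 1)) < (1 + Real.sqrt (1 - (n / α) ^ 2)) / 2)
    ↔ (α, p) ∈ interior (Kset n) := by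
  obtain ⟨hα0, hα1⟩ := hα
  have hn : n ≠ 0 := by intro h; simp [h] at hn0
  rw [interior_Kset n hn]
  simp only [Set.mem_setOf_eq]
  constructor
  · rintro ⟨h1, h2⟩
    have ht : 0 < Real.sqrt (1 - (n / α) ^ 2) := by
      by_contra h
      push_neg at h
      have h0 : Real.sqrt (1 - (n / α) ^ 2) = 0 :=
        le_antisymm h (Real.sqrt_nonneg _)
      rw [h0] at h1 h2; linarith
    have harg : 0 < 1 - (n / α) ^ 2 := Real.sqrt_pos.mp ht
    have hna : |n| < α := by
      have hd : (n / α) ^ 2 = n ^ 2 / α ^ 2 := by rw [div_pow]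
      rw [hd] at harg
      have hα2 : 0 < α ^ 2 := by positivity
      have h' : n ^ 2 < α ^ 2 := by
        have := (div_lt_one hα2).mp (sub_pos.mp harg)
        nlinarith
      nlinarith [sq_abs n, abs_nonneg n]
    have := (Gamma_algebra n α p hn0 hα0 hα1 hp hna).mp ⟨h1, h2⟩
    exact ⟨hna, hα1, this.1, this.2⟩
  · rintro ⟨hna, _, hPm, hPp⟩
    exact (Gamma_algebra n α p hn0 hα0 hα1 hp hna).mpr ⟨hPm, hPp⟩
end
end

section
/- Let 0 < |n| < 1 and let (α,p) be in the interior of K_{|n|}. Then p > P_−(α) ≥ 1/α; in particular αp > 1, and both diagonal entries of Q_{α,p}(v,u) are positive for all v ≥ u > 0, hence tr Q_{α,p}(v,u) > 0. -/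
open MeasureTheory Set Filter Topology

noncomputable section

set_option maxHeartbeats 1000000 in
/-- for `0 < |n| < 1` and `(α,p)` in the interior of `K_{|n|}`, one has
`p > P₋(α) ≥ 1/α` (in particular `αp > 1`), and both diagonal entries of `Q_{α,p}(v,u)`
are positive for all `v ≥ u > 0`, hence `tr Q_{α,p}(v,u) > 0`. -/
theorem interior_Kset_diagonal_positive (n α p : ℝ) (hn0 : 0 < |n|) (hn1 : |n| < 1)
    (hK : (α, p) ∈ interior (Kset n)) :
    Pminus n α < p ∧ 1 / α ≤ Pminus n α ∧ 1 < α * p ∧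
    ∀ v u : ℝ, 0 < u → u ≤ v →
      0 < Qmat n α p v u 0 0 ∧ 0 < Qmat n α p v u 1 1 ∧
      0 < (Qmat n α p v u).trace := by
  have hn : n ≠ 0 := abs_pos.mp hn0
  have hKsub := interior_subset hK
  simp only [Kset, if_neg hn, mem_setOf_eq] at hKsub
  obtain ⟨hna, ha1, hpm, hpp⟩ := hKsub
  have hα0 : 0 < α := lt_of_lt_of_le hn0 hna
  -- strict inequality from interior
  rw [mem_interior_iff_mem_nhds, Metric.mem_nhds_iff] at hK
  obtain ⟨ε, hε, hball⟩ := hK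
  have hmem : ((α, p - ε/2) : ℝ × ℝ) ∈ Metric.ball ((α, p) : ℝ × ℝ) ε := by
    rw [Metric.mem_ball, Prod.dist_eq]
    simp only [Real.dist_eq]
    rw [max_lt_iff]
    constructor
    · simpa using hε
    · rw [show p - ε/2 - p = -(ε/2) by ring, abs_neg, abs_of_pos (by linarith)]
      linarith
  have hthis := hball hmem
  simp only [Kset, if_neg hn, mem_setOf_eq] at hthis
  have hlt : Pminus n α < p := by linarith [hthis.2.2.1]
  -- algebraic fact 1/α ≤ Pminus
  set s := Real.sqrt (α ^ 2 - n ^ 2) with hs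
  have hn2 : 0 < n ^ 2 := by positivity
  have hα2 : n ^ 2 ≤ α ^ 2 := by nlinarith [sq_abs n, abs_nonneg n]
  have hs0 : 0 ≤ s := Real.sqrt_nonneg _
  have hssq : s ^ 2 = α ^ 2 - n ^ 2 := Real.sq_sqrt (by linarith)
  have hsα : s ≤ α := by nlinarith
  have hPm : 1 / α ≤ Pminus n α := by
    rw [div_le_iff₀ hα0]
    have key : 0 ≤ (1 - α) * (2 * α * (α - s) - n ^ 2) := by
      apply mul_nonneg (by linarith)
      nlinarith
    have hid : Pminus n α * α - 1 = ((1 - α) * (2 * α * (α - s) - n ^ 2)) / n ^ 2 := by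
      unfold Pminus
      rw [← hs]
      field_simp
      ring
    nlinarith [div_nonneg key (le_of_lt hn2)]
  have hαp : 1 < α * p := by
    have : 1 / α < p := lt_of_le_of_lt hPm hlt
    rw [div_lt_iff₀ hα0] at this
    linarith [this]
  have hp1 : 1 < p := by
    have h1 : (1 : ℝ) ≤ 1 / α := by
      rw [le_div_iff₀ hα0]; linarith
    linarith [lt_of_le_of_lt (le_trans h1 hPm) hlt]
  refine ⟨hlt, hPm, hαp, ?_⟩
  intro v u hu huv
  have hv : 0 < v := lt_of_lt_of_le hu huv
  have hcond : ¬(α = 1 ∧ p = 1) := by rintro ⟨-, rfl⟩; linarith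
  have hvpow : 0 < v ^ (n / α) := Real.rpow_pos_of_pos hv _
  have hupow : 0 < u ^ (n / α) := Real.rpow_pos_of_pos hu _
  set Γ : ℝ := (1 - α) / (α * (p - 1)) with hΓ
  have hΓ0 : 0 ≤ Γ := div_nonneg (by linarith) (by nlinarith)
  have hΓ1 : Γ < 1 := by
    rw [hΓ, div_lt_one (by nlinarith)]
    nlinarith
  have huv1 : 0 < u / v := div_pos hu hv
  have huv2 : u / v ≤ 1 := (div_le_one hv).mpr huv
  have hvu1 : 1 ≤ v / u := (le_div_iff₀ hu).mpr (by linarith)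
  have e00 : Qmat n α p v u 0 0 = (p - 1) * (v ^ (n / α) * (1 + Γ * (u / v - 1))) := by
    rw [Qmat, if_neg hcond]
    simp [Matrix.smul_apply, hΓ]
  have e11 : Qmat n α p v u 1 1 = (p - 1) * (u ^ (n / α) * (1 + Γ * (v / u - 1))) := by
    rw [Qmat, if_neg hcond]
    simp [Matrix.smul_apply, hΓ]
  have h00 : 0 < Qmat n α p v u 0 0 := by
    rw [e00]
    have hx : 0 ≤ Γ * (u / v) := mul_nonneg hΓ0 huv1.le
    have hx2 : Γ * (u / v - 1) = Γ * (u / v) - Γ := by ring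
    apply mul_pos (by linarith)
    apply mul_pos hvpow
    linarith
  have h11 : 0 < Qmat n α p v u 1 1 := by
    rw [e11]
    have hx : 0 ≤ Γ * (v / u - 1) := mul_nonneg hΓ0 (by linarith)
    apply mul_pos (by linarith)
    apply mul_pos hupow
    linarith
  refine ⟨h00, h11, ?_⟩
  rw [Matrix.trace_fin_two]
  exact add_pos h00 h11
end
end

section
/- Let 0 < |n| < 1 and let (α,p) be in the interior of K_{|n|}. Then there exists ν₁ = ν₁(n,α,p) > 0 such that M_{α,p} ≥ ν₁ I₂, where I₂ is the 2×2 identity matrix; in particular M_{α,p} is positive definite. -/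
open MeasureTheory Set Filter Topology

noncomputable section

/-! Interior points of `K_{|n|}` satisfy all defining inequalities strictly. Since `P₋(α) - 1`
and `P₊(α) - 1` are the roots of `n²x² - 4α(1-α)x + 4(1-α)²`, this quadratic is negative at
`x = p - 1`; dividing by `-4α²(p-1)²` turns that into `(γ/2 - Γ)² < Γ(1-γ)`, the positivity
of `det (M_{α,p} / (p-1))`. A symmetric matrix `[[a, b], [b, d]]` with `a > 0` and `ad > b²`
dominates `ν I₂` for `ν = (ad - b²)/(a + d)`, as `det ([[a, b], [b, d]] - ν I₂) = ν²`. -/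

theorem Matrix.posSemidef_fin_two_of_sq_le {a b d : ℝ} (ha : 0 ≤ a) (hd : 0 ≤ d)
    (hdet : b ^ 2 ≤ a * d) : (!![a, b; b, d]).PosSemidef := by
  refine .of_dotProduct_mulVec_nonneg ?_ fun x => ?_
  · ext i j; fin_cases i <;> fin_cases j <;> rfl
  simp only [star_trivial, dotProduct, Matrix.mulVec, Fin.sum_univ_two, Matrix.of_apply,
    Matrix.cons_val', Matrix.cons_val_zero, Matrix.cons_val_one, Matrix.empty_val',
    Matrix.cons_val_fin_one]
  rcases ha.eq_or_lt with rfl | ha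
  · obtain rfl : b = 0 := by nlinarith
    nlinarith [mul_nonneg hd (sq_nonneg (x 1))]
  · have hscaled : 0 ≤ a * (x 0 * (a * x 0 + b * x 1) + x 1 * (b * x 0 + d * x 1)) := by
      nlinarith [sq_nonneg (a * x 0 + b * x 1), mul_nonneg (sub_nonneg.2 hdet) (sq_nonneg (x 1))]
    exact nonneg_of_mul_nonneg_right (by linarith) ha

theorem Matrix.exists_posSemidef_sub_smul_one_fin_two {a b d : ℝ} (ha : 0 < a)
    (hdet : b ^ 2 < a * d) : ∃ ν : ℝ, 0 < ν ∧ (!![a, b; b, d] - ν • 1).PosSemidef := by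
  have hd : 0 < d := by nlinarith [sq_nonneg b]
  have hsum : 0 < a + d := by positivity
  obtain ⟨ν, hν⟩ : ∃ ν, ν = (a * d - b ^ 2) / (a + d) := ⟨_, rfl⟩
  have hνad : ν * (a + d) = a * d - b ^ 2 := by rw [hν, div_mul_cancel₀ _ hsum.ne']
  have hsub : !![a, b; b, d] - ν • 1 = !![a - ν, b; b, d - ν] := by
    ext i j; fin_cases i <;> fin_cases j <;> simp
  have hdet_sub : (a - ν) * (d - ν) - b ^ 2 = ν ^ 2 := by linear_combination (-1 : ℝ) * hνad
  refine ⟨ν, hν ▸ div_pos (by linarith) hsum, hsub ▸ posSemidef_fin_two_of_sq_le ?_ ?_ ?_⟩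
  · nlinarith [sq_nonneg b]
  · nlinarith [sq_nonneg b]
  · nlinarith [sq_nonneg ν]

theorem mem_Ioo_of_mem_interior_Kset {n α p : ℝ} (hn : n ≠ 0)
    (h : (α, p) ∈ interior (Kset n)) :
    α ∈ Ioo |n| 1 ∧ p ∈ Ioo (Pminus n α) (Pplus n α) := by
  have hK : Kset n = {q | q.1 ∈ Icc |n| 1 ∧ q.2 ∈ Icc (Pminus n q.1) (Pplus n q.1)} := by
    simp [Kset, hn, and_assoc]
  rw [hK] at h
  constructor
  · rw [← interior_Icc]
    exact interior_mono (fun a ha => ha.1)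
      (preimage_interior_subset_interior_preimage (f := (·, p)) (by fun_prop) h)
  · rw [← interior_Icc]
    exact interior_mono (fun t ht => ht.2)
      (preimage_interior_subset_interior_preimage (f := (α, ·)) (by fun_prop) h)

theorem mul_sub_Pminus_mul_sub_Pplus {n α : ℝ} (hn : n ≠ 0) (hα : n ^ 2 ≤ α ^ 2)
    (x : ℝ) : n ^ 2 * (x - (Pminus n α - 1)) * (x - (Pplus n α - 1)) =
      n ^ 2 * x ^ 2 - 4 * α * (1 - α) * x + 4 * (1 - α) ^ 2 := by
  have hsqrt := Real.sq_sqrt (sub_nonneg.2 hα)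
  simp only [Pminus, Pplus]
  field_simp
  linear_combination (-4 * (1 - α) ^ 2) * hsqrt

theorem one_lt_and_quadratic_neg_of_mem_Ioo {n α p : ℝ} (hn : n ≠ 0) (hα : α ∈ Ioo |n| 1)
    (hp : p ∈ Ioo (Pminus n α) (Pplus n α)) :
    1 < p ∧ n ^ 2 * (p - 1) ^ 2 - 4 * α * (1 - α) * (p - 1) + 4 * (1 - α) ^ 2 < 0 := by
  have hnα : n ^ 2 ≤ α ^ 2 := by nlinarith [sq_abs n, abs_nonneg n, hα.1]
  have hsqrt : Real.sqrt (α ^ 2 - n ^ 2) ≤ α :=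
    Real.sqrt_le_iff.2 ⟨by linarith [abs_nonneg n, hα.1], by nlinarith [sq_nonneg n]⟩
  have hPminus : 1 ≤ Pminus n α := by
    have : 0 ≤ 2 / n ^ 2 * (1 - α) * (α - Real.sqrt (α ^ 2 - n ^ 2)) := by
      have := hα.2; have := sub_nonneg.2 hsqrt; positivity
    unfold Pminus; linarith
  refine ⟨hPminus.trans_lt hp.1, ?_⟩
  rw [← mul_sub_Pminus_mul_sub_Pplus hn hnα]
  have := mul_neg_of_pos_of_neg (by positivity : 0 < n ^ 2) (sub_neg.2 (sub_lt_sub_right hp.2 1))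
  nlinarith [sub_pos.2 (sub_lt_sub_right hp.1 1)]

theorem sq_lt_of_quadratic_neg {n α p : ℝ} (hα : 0 < α) (hp : 1 < p)
    (hq : n ^ 2 * (p - 1) ^ 2 - 4 * α * (1 - α) * (p - 1) + 4 * (1 - α) ^ 2 < 0) :
    (-((1 - α) / (α * (p - 1))) + (n / α) / 2) ^ 2 <
      ((1 - α) / (α * (p - 1))) * (1 - n / α) := by
  have hp1 : 0 < p - 1 := sub_pos.2 hp
  have hdet : ((1 - α) / (α * (p - 1))) * (1 - n / α) -
      (-((1 - α) / (α * (p - 1))) + (n / α) / 2) ^ 2 =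
        -(n ^ 2 * (p - 1) ^ 2 - 4 * α * (1 - α) * (p - 1) + 4 * (1 - α) ^ 2) /
          (4 * α ^ 2 * (p - 1) ^ 2) := by
    field_simp; ring
  rw [← sub_pos, hdet]
  exact div_pos (by linarith) (by positivity)

theorem Mmat_posdef_interior_general (n α p : ℝ) (hn0 : 0 < |n|)
    (hK : (α, p) ∈ interior (Kset n)) :
    ∃ ν₁ : ℝ, 0 < ν₁ ∧
      (Mmat n α p - ν₁ • (1 : Matrix (Fin 2) (Fin 2) ℝ)).PosSemidef ∧
      (Mmat n α p).PosDef := by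
  have hn : n ≠ 0 := abs_pos.mp hn0
  obtain ⟨hα, hp⟩ := mem_Ioo_of_mem_interior_Kset hn hK
  obtain ⟨hp1, hq⟩ := one_lt_and_quadratic_neg_of_mem_Ioo hn hα hp
  have hdet := sq_lt_of_quadratic_neg (hn0.trans hα.1) hp1 hq
  obtain ⟨ν, hν, hpsd⟩ :=
    Matrix.exists_posSemidef_sub_smul_one_fin_two one_pos (hdet.trans_eq (one_mul _).symm)
  have hνM : (Mmat n α p - ((p - 1) * ν) • 1).PosSemidef := by
    rw [Mmat, if_neg fun h => hα.2.ne h.1, mul_smul, ← smul_sub]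
    exact hpsd.smul (sub_pos.2 hp1).le
  have hν₁ : 0 < (p - 1) * ν := mul_pos (sub_pos.2 hp1) hν
  exact ⟨_, hν₁, hνM, by
    simpa using Matrix.PosDef.posSemidef_add hνM (Matrix.PosDef.one.smul hν₁)⟩

/-- Lemma: properties of `M_{α,p}`: for `0 < |n| < 1` and `(α,p)` in the
interior of `K_{|n|}`, there exists `ν₁ = ν₁(n,α,p) > 0` with `M_{α,p} ≥ ν₁ I₂`; in
particular `M_{α,p}` is positive definite. -/
theorem Mmat_posdef_interior (n α p : ℝ) (hn0 : 0 < |n|) (hn1 : |n| < 1)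
    (hK : (α, p) ∈ interior (Kset n)) :
    ∃ ν₁ : ℝ, 0 < ν₁ ∧
      (Mmat n α p - ν₁ • (1 : Matrix (Fin 2) (Fin 2) ℝ)).PosSemidef ∧
      (Mmat n α p).PosDef :=
  Mmat_posdef_interior_general n α p hn0 hK
end
end

section
/- Let 0 < |n| < 1 and (α,p) ∈ K_{|n|}. Then the matrix M_{α,p} is positive semidefinite. -/
open MeasureTheory Set Filter Topology

noncomputable section

/-
Write `d = p - 1`. For `d > 0` the matrix is `d • !![1, b; b, e]`, which is positive semidefinite
as soon as `b ^ 2 ≤ e`. Multiplied by `α²d²`, the difference `e - b²` becomes the quadratic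
`(1-α)αd - (1-α)² - n²d²/4` in `d`, whose roots are `P±(α) - 1`; so it is nonnegative exactly
on `[P₋(α), P₊(α)]`, and `P₋(α) ≥ 1` forces `d ≥ 0` on `K_{|n|}`.
-/

theorem Matrix.posSemidef_of_sq_le {b e : ℝ} (h : b ^ 2 ≤ e) :
    !![(1 : ℝ), b; b, e].PosSemidef := by
  refine .of_dotProduct_mulVec_nonneg ?_ fun x => ?_
  · ext i j
    fin_cases i <;> fin_cases j <;> rfl
  · simp only [star_trivial, dotProduct, mulVec, Fin.sum_univ_two, Matrix.of_apply,
      Matrix.cons_val', Matrix.cons_val_zero, Matrix.cons_val_one, Matrix.empty_val',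
      Matrix.cons_val_fin_one]
    nlinarith [sq_nonneg (x 0 + b * x 1), mul_nonneg (sub_nonneg.2 h) (sq_nonneg (x 1))]

lemma one_le_Pminus {n a : ℝ} (hna : |n| ≤ a) (ha1 : a ≤ 1) : 1 ≤ Pminus n a := by
  have hsa : Real.sqrt (a ^ 2 - n ^ 2) ≤ a :=
    Real.sqrt_le_iff.2 ⟨(abs_nonneg n).trans hna, by nlinarith [sq_nonneg n]⟩
  unfold Pminus
  have := mul_nonneg (mul_nonneg (by positivity : (0:ℝ) ≤ 2 / n ^ 2) (sub_nonneg.2 ha1))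
    (sub_nonneg.2 hsa)
  linarith

lemma sub_Pminus_mul_Pplus_sub {n a : ℝ} (hn : n ≠ 0) (hna : n ^ 2 ≤ a ^ 2) (p : ℝ) :
    (p - Pminus n a) * (Pplus n a - p) =
      4 / n ^ 2 * ((1 - a) * a * (p - 1) - (1 - a) ^ 2 - n ^ 2 * (p - 1) ^ 2 / 4) := by
  have hs := Real.sq_sqrt (sub_nonneg.2 hna)
  unfold Pminus Pplus
  field_simp
  linear_combination (4 * (1 - a) ^ 2) * hs

lemma quadratic_nonneg_of_Pminus_le_of_le_Pplus {n a p : ℝ} (hn : n ≠ 0) (hna : n ^ 2 ≤ a ^ 2)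
    (hpl : Pminus n a ≤ p) (hpu : p ≤ Pplus n a) :
    0 ≤ (1 - a) * a * (p - 1) - (1 - a) ^ 2 - n ^ 2 * (p - 1) ^ 2 / 4 := by
  have h := mul_nonneg (sub_nonneg.2 hpl) (sub_nonneg.2 hpu)
  rw [sub_Pminus_mul_Pplus_sub hn hna] at h
  exact nonneg_of_mul_nonneg_right h (by positivity)

lemma sq_le_of_quadratic_nonneg {n a d : ℝ} (ha : 0 < a) (hd : 0 < d)
    (h : 0 ≤ (1 - a) * a * d - (1 - a) ^ 2 - n ^ 2 * d ^ 2 / 4) :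
    (-((1 - a) / (a * d)) + n / a / 2) ^ 2 ≤ (1 - a) / (a * d) * (1 - n / a) := by
  have key : (1 - a) / (a * d) * (1 - n / a) - (-((1 - a) / (a * d)) + n / a / 2) ^ 2 =
      ((1 - a) * a * d - (1 - a) ^ 2 - n ^ 2 * d ^ 2 / 4) / (a * d) ^ 2 := by
    field_simp
    ring
  rw [← sub_nonneg, key]
  positivity

lemma Mmat_one (n a : ℝ) : Mmat n a 1 = 0 := by
  unfold Mmat
  split_ifs <;> simp

theorem Mmat_posSemidef_general (n α p : ℝ) (hn0 : 0 < |n|)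
    (hK : (α, p) ∈ Kset n) :
    (Mmat n α p).PosSemidef := by
  have hn : n ≠ 0 := abs_pos.1 hn0
  obtain ⟨hnα, hα1, hpl, hpu⟩ : |n| ≤ α ∧ α ≤ 1 ∧ Pminus n α ≤ p ∧ p ≤ Pplus n α := by
    simpa [Kset, hn] using hK
  rcases (one_le_Pminus hnα hα1 |>.trans hpl).eq_or_lt with rfl | hp1
  · rw [Mmat_one]
    exact .zero
  have hα0 : 0 < α := hn0.trans_le hnα
  have hd : 0 < p - 1 := sub_pos.2 hp1
  have hnα2 : n ^ 2 ≤ α ^ 2 := sq_le_sq.2 (by rwa [abs_of_pos hα0])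
  have hdet := sq_le_of_quadratic_nonneg hα0 hd
    (quadratic_nonneg_of_Pminus_le_of_le_Pplus hn hnα2 hpl hpu)
  rw [Mmat, if_neg fun h => hp1.ne' h.2]
  exact (Matrix.posSemidef_of_sq_le hdet).smul hd.le

/-- for `0 < |n| < 1` and `(α,p) ∈ K_{|n|}`, the matrix `M_{α,p}` is
positive semidefinite. -/
theorem Mmat_posSemidef (n α p : ℝ) (hn0 : 0 < |n|) (hn1 : |n| < 1)
    (hK : (α, p) ∈ Kset n) :
    (Mmat n α p).PosSemidef :=
  Mmat_posSemidef_general n α p hn0 hK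
end
end

section
/- Let |n| < 1 and (α,p) ∈ K_{|n|}. Let Ω₁ ⊂ ℝ^d be open and u, w, z ∈ C¹(Ω₁) with u > 0 on Ω₁. For η ∈ (0,1), let v_η be a function satisfying ‖v_η − (u + ηw + η²z)‖_{C¹(Ω₁)} = o(η²) as η → 0. Then at every point of Ω₁, J_η(v_η,u) := η^{−2} (∇v_η, ∇u)ᵀ Q_{α,p}(v_η, u) (∇v_η, ∇u) converges as η → 0 to J₀ = u^{γ−2} (u∇w, w∇u)ᵀ M_{α,p} (u∇w, w∇u). -/
open MeasureTheory Set Filter Topology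

noncomputable section

abbrev Euc (d : ℕ) := EuclideanSpace ℝ (Fin d)

/-- The quadratic form `(X,Y)ᵀ A (X,Y) = A₁₁|X|² + 2A₁₂ X·Y + A₂₂|Y|²`. -/
def quadForm {d : ℕ} (A : Matrix (Fin 2) (Fin 2) ℝ) (X Y : Euc d) : ℝ :=
  A 0 0 * ‖X‖ ^ 2 + 2 * A 0 1 * (inner ℝ X Y : ℝ) + A 1 1 * ‖Y‖ ^ 2

/-! Write `v = u + η w + o(η)` and `∇v = ∇u + η ∇w + o(η)`. For `v, u > 0` the form
`(∇v, ∇u)ᵀ Q (∇v, ∇u) / (p - 1)` regroups as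
`v^γ |∇v - ∇u|² + (v^γ - u^γ) ∇u·(∇v - ∇u)`
`  - Γ (v - u) ((v^{γ-1} - u^{γ-1}) |∇v|² + u^{γ-1} (|∇v|² - |∇u|²))`,
in which every term is a product of two `O(η)` differences. Divided by `η²` it becomes a
combination of difference quotients, whose limits are `w`, `∇w` and, by the chain rule,
`γ u^{γ-1} w` and `(γ - 1) u^{γ-2} w`. -/

lemma tendsto_inv_smul_sub_of_norm_le {E : Type*} [NormedAddCommGroup E] [NormedSpace ℝ E]
    {a : ℝ → E} {a₀ a₁ a₂ : E} {ε : ℝ → ℝ}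
    (hε : Tendsto (fun η => ε η / η ^ 2) (𝓝[>] 0) (𝓝 0))
    (hbound : ∀ᶠ η in 𝓝[>] 0, ‖a η - (a₀ + η • a₁ + η ^ 2 • a₂)‖ ≤ ε η) :
    Tendsto (fun η => η⁻¹ • (a η - a₀)) (𝓝[>] 0) (𝓝 a₁) := by
  have hη : Tendsto (fun η : ℝ => η) (𝓝[>] 0) (𝓝 0) := nhdsWithin_le_nhds
  have hrem : Tendsto (fun η => η⁻¹ • (a η - (a₀ + η • a₁ + η ^ 2 • a₂))) (𝓝[>] 0) (𝓝 0) := by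
    refine squeeze_zero_norm' ?_ (by simpa using hη.mul hε)
    filter_upwards [hbound, self_mem_nhdsWithin] with η hle (hpos : 0 < η)
    rw [norm_smul, norm_inv, Real.norm_of_nonneg hpos.le]
    calc η⁻¹ * ‖a η - (a₀ + η • a₁ + η ^ 2 • a₂)‖ ≤ η⁻¹ * ε η := by gcongr
      _ = η * (ε η / η ^ 2) := by field_simp
  have hlim := (tendsto_const_nhds (x := a₁)).add ((hη.smul_const a₂).add hrem)
  rw [zero_smul, zero_add, add_zero] at hlim
  refine hlim.congr' ?_
  filter_upwards [self_mem_nhdsWithin] with η (hpos : 0 < η)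
  simp only [smul_sub, smul_add, smul_smul, inv_mul_cancel₀ hpos.ne', one_smul,
    show η⁻¹ * η ^ 2 = η by field_simp]
  abel

lemma tendsto_inv_mul_sub_comp {f : ℝ → ℝ} {f' U W : ℝ} {l : Filter ℝ} {V : ℝ → ℝ}
    (hf : HasDerivAt f f' U) (hV : Tendsto V l (𝓝 U))
    (hslope : Tendsto (fun η => η⁻¹ * (V η - U)) l (𝓝 W)) :
    Tendsto (fun η => η⁻¹ * (f (V η) - f U)) l (𝓝 (f' * W)) := by
  have hcont : Tendsto (dslope f U) (𝓝 U) (𝓝 f') := by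
    simpa [dslope_same, hf.deriv] using
      (continuousAt_dslope_same.2 hf.differentiableAt).tendsto
  refine ((hcont.comp hV).mul hslope).congr fun η => ?_
  rw [Function.comp_apply, ← sub_smul_dslope f U (V η), smul_eq_mul]
  ring

lemma tendsto_of_tendsto_inv_smul_sub {E : Type*} [NormedAddCommGroup E] [NormedSpace ℝ E]
    {a : ℝ → E} {a₀ a₁ : E} (h : Tendsto (fun η => η⁻¹ • (a η - a₀)) (𝓝[>] 0) (𝓝 a₁)) :
    Tendsto a (𝓝[>] 0) (𝓝 a₀) := by
  have hη : Tendsto (fun η : ℝ => η) (𝓝[>] 0) (𝓝 0) := nhdsWithin_le_nhds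
  have hlim := (hη.smul h).add_const a₀
  rw [zero_smul, zero_add] at hlim
  refine hlim.congr' ?_
  filter_upwards [self_mem_nhdsWithin] with η (hpos : 0 < η)
  rw [smul_smul, mul_inv_cancel₀ hpos.ne', one_smul, sub_add_cancel]

def Qcore (γ Γ v u : ℝ) : Matrix (Fin 2) (Fin 2) ℝ :=
  !![v ^ γ * (1 + Γ * (u / v - 1)), -(v ^ γ + u ^ γ) / 2;
    -(v ^ γ + u ^ γ) / 2, u ^ γ * (1 + Γ * (v / u - 1))]

def Mcore (γ Γ : ℝ) : Matrix (Fin 2) (Fin 2) ℝ :=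
  !![(1 : ℝ), -Γ + γ / 2; -Γ + γ / 2, Γ * (1 - γ)]

lemma Qmat_eq_smul_Qcore (n a p v u : ℝ) (h : ¬(a = 1 ∧ p = 1)) :
    Qmat n a p v u = (p - 1) • Qcore (n / a) ((1 - a) / (a * (p - 1))) v u :=
  if_neg h

lemma Mmat_eq_smul_Mcore (n a p : ℝ) (h : ¬(a = 1 ∧ p = 1)) :
    Mmat n a p = (p - 1) • Mcore (n / a) ((1 - a) / (a * (p - 1))) :=
  if_neg h

section QuadForm

variable {d : ℕ}

lemma quadForm_zero (X Y : Euc d) : quadForm 0 X Y = 0 := by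
  simp [quadForm]

lemma quadForm_smul (c : ℝ) (A : Matrix (Fin 2) (Fin 2) ℝ) (X Y : Euc d) :
    quadForm (c • A) X Y = c * quadForm A X Y := by
  simp only [quadForm, Matrix.smul_apply, smul_eq_mul]
  ring

lemma quadForm_Qcore {γ Γ V U : ℝ} (hV : 0 < V) (hU : 0 < U) (X Y : Euc d) :
    quadForm (Qcore γ Γ V U) X Y =
      V ^ γ * ‖X - Y‖ ^ 2 + (V ^ γ - U ^ γ) * inner ℝ Y (X - Y) -
        Γ * (V - U) * ((V ^ (γ - 1) - U ^ (γ - 1)) * ‖X‖ ^ 2 +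
          U ^ (γ - 1) * inner ℝ (X - Y) (X + Y)) := by
  simp only [quadForm, Qcore, Matrix.of_apply, Matrix.cons_val', Matrix.cons_val_zero,
    Matrix.cons_val_one, Matrix.empty_val', Matrix.cons_val_fin_one]
  simp only [inner_sub_left, inner_sub_right, inner_add_right, real_inner_self_eq_norm_sq,
    real_inner_comm X Y, norm_sub_sq_real, Real.rpow_sub_one hV.ne', Real.rpow_sub_one hU.ne']
  field_simp
  ring

lemma quadForm_Mcore {γ Γ U W : ℝ} (hU : 0 < U) (G Y : Euc d) :
    U ^ (γ - 2) * quadForm (Mcore γ Γ) (U • G) (W • Y) =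
      U ^ γ * ‖G‖ ^ 2 + γ * U ^ (γ - 1) * W * inner ℝ Y G -
        Γ * W * ((γ - 1) * U ^ (γ - 1 - 1) * W * ‖Y‖ ^ 2 + U ^ (γ - 1) * inner ℝ G (Y + Y)) := by
  simp only [quadForm, Mcore, Matrix.of_apply, Matrix.cons_val', Matrix.cons_val_zero,
    Matrix.cons_val_one, Matrix.empty_val', Matrix.cons_val_fin_one]
  simp only [norm_smul, Real.norm_eq_abs, mul_pow, sq_abs, real_inner_smul_left,
    real_inner_smul_right, inner_add_right, real_inner_comm Y G,
    show γ - 2 = γ - 1 - 1 by ring, Real.rpow_sub_one hU.ne']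
  field_simp
  ring

lemma tendsto_quadForm_Qcore {γ Γ U W : ℝ} {Y G : Euc d} {V : ℝ → ℝ} {X : ℝ → Euc d}
    (hU : 0 < U) (hV : Tendsto (fun η => η⁻¹ * (V η - U)) (𝓝[>] 0) (𝓝 W))
    (hX : Tendsto (fun η => η⁻¹ • (X η - Y)) (𝓝[>] 0) (𝓝 G)) :
    Tendsto (fun η => (η ^ 2)⁻¹ * quadForm (Qcore γ Γ (V η) U) (X η) Y) (𝓝[>] 0)
      (𝓝 (U ^ (γ - 2) * quadForm (Mcore γ Γ) (U • G) (W • Y))) := by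
  have hV₀ : Tendsto V (𝓝[>] 0) (𝓝 U) := tendsto_of_tendsto_inv_smul_sub hV
  have hX₀ : Tendsto X (𝓝[>] 0) (𝓝 Y) := tendsto_of_tendsto_inv_smul_sub hX
  have hslope_pow := tendsto_inv_mul_sub_comp
    (Real.hasDerivAt_rpow_const (p := γ) (Or.inl hU.ne')) hV₀ hV
  have hslope_pow_sub_one := tendsto_inv_mul_sub_comp
    (Real.hasDerivAt_rpow_const (p := γ - 1) (Or.inl hU.ne')) hV₀ hV
  have hVγ : Tendsto (fun η => V η ^ γ) (𝓝[>] 0) (𝓝 (U ^ γ)) :=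
    (Real.continuousAt_rpow_const U γ (Or.inl hU.ne')).tendsto.comp hV₀
  -- the regrouping of `quadForm_Qcore`, divided by `η²`
  have hlim :=
    ((hVγ.mul (hX.norm.pow 2)).add
      (hslope_pow.mul ((tendsto_const_nhds (x := Y)).inner hX))).sub
    (((tendsto_const_nhds (x := Γ)).mul hV).mul
      ((hslope_pow_sub_one.mul (hX₀.norm.pow 2)).add
        ((tendsto_const_nhds (x := U ^ (γ - 1))).mul
          (hX.inner (hX₀.add (tendsto_const_nhds (x := Y)))))))
  rw [quadForm_Mcore hU]
  refine hlim.congr' ?_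
  filter_upwards [hV₀.eventually (eventually_gt_nhds hU), self_mem_nhdsWithin]
    with η hVη (hη : 0 < η)
  rw [quadForm_Qcore hVη hU]
  simp only [norm_smul, norm_inv, Real.norm_of_nonneg hη.le, mul_pow, real_inner_smul_left,
    real_inner_smul_right]
  field_simp

end QuadForm

theorem limit_of_quadratic_term_general (d : ℕ) (n α p : ℝ)
    (Ω₁ : Set (Euc d))
    (u w z : Euc d → ℝ)
    (hupos : ∀ x ∈ Ω₁, 0 < u x)
    (v : ℝ → Euc d → ℝ)
    (ε : ℝ → ℝ)
    (hε : Tendsto (fun η => ε η / η ^ 2) (𝓝[>] (0:ℝ)) (𝓝 0))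
    (happrox : ∀ η ∈ Ioo (0:ℝ) 1, ∀ x ∈ Ω₁,
      |v η x - (u x + η * w x + η ^ 2 * z x)| ≤ ε η ∧
      ‖gradient (v η) x - (gradient u x + η • gradient w x + η ^ 2 • gradient z x)‖ ≤ ε η) :
    ∀ x ∈ Ω₁,
      Tendsto (fun η : ℝ =>
          (η ^ 2)⁻¹ * quadForm (Qmat n α p (v η x) (u x)) (gradient (v η) x) (gradient u x))
        (𝓝[>] (0:ℝ))
        (𝓝 (u x ^ (n / α - 2) *
          quadForm (Mmat n α p) (u x • gradient w x) (w x • gradient u x))) := by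
  intro x hx
  have hV : Tendsto (fun η => η⁻¹ * (v η x - u x)) (𝓝[>] 0) (𝓝 (w x)) :=
    tendsto_inv_smul_sub_of_norm_le hε <| by
      filter_upwards [Ioo_mem_nhdsGT one_pos] with η hη using (happrox η hη x hx).1
  have hX : Tendsto (fun η => η⁻¹ • (gradient (v η) x - gradient u x)) (𝓝[>] 0)
      (𝓝 (gradient w x)) :=
    tendsto_inv_smul_sub_of_norm_le hε <| by
      filter_upwards [Ioo_mem_nhdsGT one_pos] with η hη using (happrox η hη x hx).2
  by_cases hdeg : α = 1 ∧ p = 1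
  · simp only [Qmat, Mmat, if_pos hdeg, quadForm_zero, mul_zero]
    exact tendsto_const_nhds
  have hlim := (tendsto_quadForm_Qcore (γ := n / α) (Γ := (1 - α) / (α * (p - 1)))
    (hupos x hx) hV hX).const_mul (p - 1)
  simpa only [Qmat_eq_smul_Qcore _ _ _ _ _ hdeg, Mmat_eq_smul_Mcore _ _ _ hdeg, quadForm_smul,
    mul_left_comm] using hlim

/-- Lemma: limit of the quadratic term: let `|n| < 1`,
`(α,p) ∈ K_{|n|}`, `Ω₁ ⊆ ℝ^d` open, `u, w, z ∈ C¹(Ω₁)` with `u > 0` on `Ω₁`, and for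
`η ∈ (0,1)` let `v_η ∈ C¹(Ω₁)` satisfy `‖v_η - (u + ηw + η²z)‖_{C¹(Ω₁)} = o(η²)`
(encoded by a bound `ε(η)` with `ε(η)/η² → 0` as `η → 0⁺`). Then at every point of `Ω₁`,
`J_η(v_η,u) = η⁻² (∇v_η,∇u)ᵀ Q_{α,p}(v_η,u) (∇v_η,∇u)` converges as `η → 0⁺` to
`J₀ = u^{γ-2} (u∇w, w∇u)ᵀ M_{α,p} (u∇w, w∇u)`. -/
theorem limit_of_quadratic_term (d : ℕ) (hd : 1 ≤ d) (n α p : ℝ) (hn1 : |n| < 1)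
    (hK : (α, p) ∈ Kset n)
    (Ω₁ : Set (Euc d)) (hΩ₁ : IsOpen Ω₁)
    (u w z : Euc d → ℝ)
    (hu : ContDiffOn ℝ 1 u Ω₁) (hw : ContDiffOn ℝ 1 w Ω₁) (hz : ContDiffOn ℝ 1 z Ω₁)
    (hupos : ∀ x ∈ Ω₁, 0 < u x)
    (v : ℝ → Euc d → ℝ) (hv : ∀ η ∈ Ioo (0:ℝ) 1, ContDiffOn ℝ 1 (v η) Ω₁)
    (ε : ℝ → ℝ)
    (hε : Tendsto (fun η => ε η / η ^ 2) (𝓝[>] (0:ℝ)) (𝓝 0))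
    (happrox : ∀ η ∈ Ioo (0:ℝ) 1, ∀ x ∈ Ω₁,
      |v η x - (u x + η * w x + η ^ 2 * z x)| ≤ ε η ∧
      ‖gradient (v η) x - (gradient u x + η • gradient w x + η ^ 2 • gradient z x)‖ ≤ ε η) :
    ∀ x ∈ Ω₁,
      Tendsto (fun η : ℝ =>
          (η ^ 2)⁻¹ * quadForm (Qmat n α p (v η x) (u x)) (gradient (v η) x) (gradient u x))
        (𝓝[>] (0:ℝ))
        (𝓝 (u x ^ (n / α - 2) *
          quadForm (Mmat n α p) (u x • gradient w x) (w x • gradient u x))) :=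
  limit_of_quadratic_term_general d n α p Ω₁ u w z hupos v ε hε happrox
end
end

section
/- For every n with 0 < |n| < 1, the set K_{|n|} = {(α,p) ∈ [|n|,1]×ℝ : P_−(α) ≤ p ≤ P_+(α)}, with P_±(α) = 1 + (2/n²)(1−α)(α ± √(α²−n²)), is a convex subset of ℝ². -/
open MeasureTheory Set Filter Topology

noncomputable section

/-!
`K_{|n|}` is the region between the graphs of `P₋` and `P₊` over `[|n|, 1]`, so it is convex as
soon as `P₋` is convex and `P₊` concave there. Up to the factor `2/n² ≥ 0`, both are products of
the nonnegative decreasing affine factor `1 - α` with `α ∓ √(α² - n²)`. Since `√(α² - n²)` is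
concave and increasing, `α - √(α² - n²)` is convex, nonnegative and decreasing, and
`α + √(α² - n²)` is concave, nonnegative and increasing; a product of two nonnegative convex
functions monotone in the same direction is convex, and of two nonnegative concave functions
monotone in opposite directions is concave.
-/

theorem Real.sq_sqrt_sq_sub_sq {c x : ℝ} (hx : |c| ≤ x) :
    √(x ^ 2 - c ^ 2) ^ 2 = x ^ 2 - c ^ 2 :=
  Real.sq_sqrt (by rw [sub_nonneg, ← sq_abs c]; gcongr)

theorem Real.concaveOn_sqrt_sq_sub_sq (c : ℝ) :
    ConcaveOn ℝ (Ici |c|) fun x => √(x ^ 2 - c ^ 2) := by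
  refine ⟨convex_Ici _, fun x hx y hy a b ha hb hab => ?_⟩
  simp only [smul_eq_mul, mem_Ici] at *
  have hx0 : 0 ≤ x := (abs_nonneg c).trans hx
  have hy0 : 0 ≤ y := (abs_nonneg c).trans hy
  have hs := Real.sq_sqrt_sq_sub_sq hx
  have ht := Real.sq_sqrt_sq_sub_sq hy
  set s := √(x ^ 2 - c ^ 2)
  set t := √(y ^ 2 - c ^ 2)
  -- Cauchy–Schwarz for the vectors `(s, c)` and `(t, c)`, whose norms are `x` and `y`
  have hcs : s * t + c ^ 2 ≤ x * y :=
    abs_le_of_sq_le_sq' (by nlinarith [sq_nonneg (s - t)]) (mul_nonneg hx0 hy0) |>.2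
  have hgap : (a * x + b * y) ^ 2 - c ^ 2 - (a * s + b * t) ^ 2 =
      2 * a * b * (x * y - s * t - c ^ 2) := by
    linear_combination (-a ^ 2) * hs + (-b ^ 2) * ht + c ^ 2 * (a + b + 1) * hab
  apply Real.le_sqrt_of_sq_le
  nlinarith [mul_nonneg (mul_nonneg ha hb) (sub_nonneg.2 hcs)]

theorem Real.sqrt_sq_sub_sq_le_self {c x : ℝ} (hx : 0 ≤ x) : √(x ^ 2 - c ^ 2) ≤ x :=
  (Real.sqrt_le_left hx).2 (by nlinarith [sq_nonneg c])

theorem Real.monotoneOn_sqrt_sq_sub_sq (c : ℝ) :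
    MonotoneOn (fun x => √(x ^ 2 - c ^ 2)) (Ici 0) := fun x hx y _ hxy => by
  dsimp only
  gcongr

theorem Real.antitoneOn_sub_sqrt_sq_sub_sq (c : ℝ) :
    AntitoneOn (fun x => x - √(x ^ 2 - c ^ 2)) (Ici |c|) := fun x hx y hy hxy => by
  simp only [mem_Ici] at hx hy
  have hx0 : 0 ≤ x := (abs_nonneg c).trans hx
  have hs := Real.sq_sqrt_sq_sub_sq hx
  have ht := Real.sq_sqrt_sq_sub_sq hy
  -- `(x - s)(x + s) = c²`, while `x + s` increases with `x`
  have hst := Real.monotoneOn_sqrt_sq_sub_sq c (mem_Ici.2 hx0) (mem_Ici.2 (hx0.trans hxy)) hxy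
  nlinarith [Real.sqrt_nonneg (x ^ 2 - c ^ 2), Real.sqrt_sq_sub_sq_le_self (c := c) hx0]

theorem convexOn_one_sub_mul_sub_sqrt_sq_sub_sq (c : ℝ) :
    ConvexOn ℝ (Icc |c| 1) fun a => (1 - a) * (a - √(a ^ 2 - c ^ 2)) := by
  have hsub : Icc |c| 1 ⊆ Ici |c| := Icc_subset_Ici_self
  refine ConvexOn.mul (f := fun a => 1 - a) (g := fun a => a - √(a ^ 2 - c ^ 2))
    ((convexOn_const 1 (convex_Icc _ _)).sub (concaveOn_id (convex_Icc _ _)))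
    (((convexOn_id (convex_Ici _)).sub (Real.concaveOn_sqrt_sq_sub_sq c)).subset hsub
      (convex_Icc _ _))
    (fun a ha => sub_nonneg.2 ha.2)
    (fun a ha => sub_nonneg.2 <| Real.sqrt_sq_sub_sq_le_self <| (abs_nonneg c).trans ha.1)
    (antitone_const_tsub.antitoneOn _ |>.monovaryOn <|
      (Real.antitoneOn_sub_sqrt_sq_sub_sq c).mono hsub)

theorem concaveOn_one_sub_mul_add_sqrt_sq_sub_sq (c : ℝ) :
    ConcaveOn ℝ (Icc |c| 1) fun a => (1 - a) * (a + √(a ^ 2 - c ^ 2)) := by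
  have hsub : Icc |c| 1 ⊆ Ici |c| := Icc_subset_Ici_self
  have hc0 : Ici |c| ⊆ Ici 0 := Ici_subset_Ici.2 (abs_nonneg c)
  refine ConcaveOn.mul (f := fun a => 1 - a) (g := fun a => a + √(a ^ 2 - c ^ 2))
    ((concaveOn_const 1 (convex_Icc _ _)).sub (convexOn_id (convex_Icc _ _)))
    (((concaveOn_id (convex_Ici _)).add (Real.concaveOn_sqrt_sq_sub_sq c)).subset hsub
      (convex_Icc _ _))
    (fun a ha => sub_nonneg.2 ha.2)
    (fun a ha => add_nonneg ((abs_nonneg c).trans ha.1) (Real.sqrt_nonneg _))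
    (antitone_const_tsub.antitoneOn _ |>.antivaryOn <|
      (monotoneOn_id.add (Real.monotoneOn_sqrt_sq_sub_sq c)).mono (hsub.trans hc0))

theorem Pminus_convexOn (n : ℝ) : ConvexOn ℝ (Icc |n| 1) (Pminus n) := by
  have hP : Pminus n =
      (fun a => (2 / n ^ 2) • ((1 - a) * (a - √(a ^ 2 - n ^ 2)))) + fun _ => 1 := by
    ext a
    simp only [Pminus, Pi.add_apply, smul_eq_mul]
    ring
  rw [hP]
  exact ((convexOn_one_sub_mul_sub_sqrt_sq_sub_sq n).smul (by positivity)).add_const 1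

theorem Pplus_concaveOn (n : ℝ) : ConcaveOn ℝ (Icc |n| 1) (Pplus n) := by
  have hP : Pplus n =
      (fun a => (2 / n ^ 2) • ((1 - a) * (a + √(a ^ 2 - n ^ 2)))) + fun _ => 1 := by
    ext a
    simp only [Pplus, Pi.add_apply, smul_eq_mul]
    ring
  rw [hP]
  exact ((concaveOn_one_sub_mul_add_sqrt_sq_sub_sq n).smul (by positivity)).add_const 1

theorem Kset_eq_inter {n : ℝ} (hn : n ≠ 0) :
    Kset n = {q : ℝ × ℝ | q.1 ∈ Icc |n| 1 ∧ Pminus n q.1 ≤ q.2} ∩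
      {q | q.1 ∈ Icc |n| 1 ∧ q.2 ≤ Pplus n q.1} := by
  ext q
  simp only [Kset, if_neg hn, mem_ofPred_eq, mem_inter_iff, mem_Icc]
  tauto

theorem Kset_convex_general (n : ℝ) (hn0 : 0 < |n|) :
    Convex ℝ (Kset n) := by
  rw [Kset_eq_inter (abs_pos.mp hn0)]
  exact (Pminus_convexOn n).convex_epigraph.inter (Pplus_concaveOn n).convex_hypograph

/-- for every `n` with `0 < |n| < 1`, the admissible set `K_{|n|}` is a
convex subset of `ℝ²`. -/
theorem Kset_convex (n : ℝ) (hn0 : 0 < |n|) (hn1 : |n| < 1) :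
    Convex ℝ (Kset n) :=
  Kset_convex_general n hn0
end
end
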